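/- arXiv:1809.03771 — 10 statements merged into one kernel-verified Lean document; each statement's English description precedes it below -/
import Mathlib

section
/- Let J be a nonempty closed convex subset of a Banach space G and let S : J → J be a contraction with contraction factor ξ ∈ (0,1), and let q ∈ J be a fixed point of S. Let {δₙ} be a sequence in (0,1) with δₙ ≥ δ for some δ > 0 and all n, and let {cₙ} be generated from c₁ ∈ J by aₙ = S cₙ, bₙ = (1-δₙ)aₙ + δₙ S aₙ, c_{n+1} = S bₙ. Then for all n ≥ 1, ‖c_{n+1} − q‖ ≤ ξ^{2n} (1 − (1−ξ)δ)ⁿ ‖c₁ − q‖. -/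
/-!
Each step of the iteration is a composition of three contractions towards the fixed point `q`:
`S` shrinks the distance to `q` by `ξ`, the convex combination `(1 - t) • y + t • S y` by
`1 - (1 - ξ) t` (triangle inequality), and `S` again by `ξ`. Bounding `δₙ` from below by `δ₀`
gives a uniform ratio `ξ² (1 - (1 - ξ) δ₀)`, and the estimate follows by iterating it.
-/

/-- One step `cₙ ↦ cₙ₊₁` of the iteration with parameter `t = δₙ`. -/
def iterationStep {E : Type*} [AddCommGroup E] [Module ℝ E] (S : E → E) (t : ℝ) (x : E) : E :=
  S ((1 - t) • S x + t • S (S x))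

section Contraction

variable {E : Type*} [SeminormedAddCommGroup E] {J : Set E} {S : E → E} {ξ : ℝ} {q : E}

theorem norm_sub_fixedPoint_le (hS : ∀ u ∈ J, ∀ v ∈ J, ‖S u - S v‖ ≤ ξ * ‖u - v‖)
    (hqJ : q ∈ J) (hq : S q = q) {x : E} (hx : x ∈ J) : ‖S x - q‖ ≤ ξ * ‖x - q‖ := by
  simpa only [hq] using hS x hx q hqJ

variable [NormedSpace ℝ E]

theorem norm_smul_add_smul_sub_le {t : ℝ} (ht₀ : 0 ≤ t) (ht₁ : t ≤ 1) (x y : E) :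
    ‖(1 - t) • x + t • y - q‖ ≤ (1 - t) * ‖x - q‖ + t * ‖y - q‖ := by
  have hsplit : (1 - t) • x + t • y - q = (1 - t) • (x - q) + t • (y - q) := by
    simp only [smul_sub, sub_smul, one_smul]
    abel
  rw [hsplit]
  refine (norm_add_le _ _).trans_eq ?_
  rw [norm_smul_of_nonneg (sub_nonneg.2 ht₁), norm_smul_of_nonneg ht₀]

variable {t : ℝ}

theorem iterationStep_mem (hSJ : ∀ x ∈ J, S x ∈ J) (hJconv : Convex ℝ J) (ht₀ : 0 ≤ t)
    (ht₁ : t ≤ 1) {x : E} (hx : x ∈ J) : iterationStep S t x ∈ J :=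
  hSJ _ (hJconv (hSJ x hx) (hSJ _ (hSJ x hx)) (sub_nonneg.2 ht₁) ht₀ (sub_add_cancel 1 t))

theorem norm_iterationStep_sub_le (hSJ : ∀ x ∈ J, S x ∈ J) (hJconv : Convex ℝ J)
    (ht₀ : 0 ≤ t) (ht₁ : t ≤ 1) (hξ₀ : 0 ≤ ξ)
    (hS : ∀ u ∈ J, ∀ v ∈ J, ‖S u - S v‖ ≤ ξ * ‖u - v‖) (hqJ : q ∈ J) (hq : S q = q)
    {x : E} (hx : x ∈ J) :
    ‖iterationStep S t x - q‖ ≤ ξ ^ 2 * (1 - (1 - ξ) * t) * ‖x - q‖ := by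
  have hSx := hSJ x hx
  have hSx_le : ‖S x - q‖ ≤ ξ * ‖x - q‖ := norm_sub_fixedPoint_le hS hqJ hq hx
  have hcombo_le : ‖(1 - t) • S x + t • S (S x) - q‖ ≤ (1 - (1 - ξ) * t) * ‖S x - q‖ := by
    have hSSx_le := norm_sub_fixedPoint_le hS hqJ hq hSx
    calc _ ≤ (1 - t) * ‖S x - q‖ + t * ‖S (S x) - q‖ := norm_smul_add_smul_sub_le ht₀ ht₁ _ _
      _ ≤ (1 - t) * ‖S x - q‖ + t * (ξ * ‖S x - q‖) := by gcongr
      _ = (1 - (1 - ξ) * t) * ‖S x - q‖ := by ring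
  have hratio : 0 ≤ 1 - (1 - ξ) * t := by nlinarith
  calc ‖iterationStep S t x - q‖
      ≤ ξ * ‖(1 - t) • S x + t • S (S x) - q‖ :=
        norm_sub_fixedPoint_le hS hqJ hq (hJconv hSx (hSJ _ hSx) (sub_nonneg.2 ht₁) ht₀ (by ring))
    _ ≤ ξ * ((1 - (1 - ξ) * t) * (ξ * ‖x - q‖)) := by gcongr; exact hcombo_le.trans (by gcongr)
    _ = ξ ^ 2 * (1 - (1 - ξ) * t) * ‖x - q‖ := by ring

end Contraction

theorem stmt_0_general {G : Type*} [NormedAddCommGroup G] [NormedSpace ℝ G]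
    (J : Set G) (hJconv : Convex ℝ J)
    (S : G → G) (hSJ : ∀ x ∈ J, S x ∈ J)
    (ξ : ℝ) (hξ : ξ ∈ Set.Ioo (0 : ℝ) 1)
    (hS : ∀ u ∈ J, ∀ v ∈ J, ‖S u - S v‖ ≤ ξ * ‖u - v‖)
    (q : G) (hqJ : q ∈ J) (hq : S q = q)
    (δ : ℕ → ℝ) (hδ : ∀ n, δ n ∈ Set.Ioo (0 : ℝ) 1)
    (δ₀ : ℝ) (hδge : ∀ n, δ₀ ≤ δ n)
    (a b c : ℕ → G) (hc1 : c 1 ∈ J)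
    (ha : ∀ n, 1 ≤ n → a n = S (c n))
    (hb : ∀ n, 1 ≤ n → b n = (1 - δ n) • a n + δ n • S (a n))
    (hc : ∀ n, 1 ≤ n → c (n + 1) = S (b n)) :
    ∀ n, 1 ≤ n →
      ‖c (n + 1) - q‖ ≤ ξ ^ (2 * n) * (1 - (1 - ξ) * δ₀) ^ n * ‖c 1 - q‖ := by
  obtain ⟨hξ₀, hξ₁⟩ := hξ
  have hδ_nonneg n : 0 ≤ δ n := (hδ n).1.le
  have hδ_le_one n : δ n ≤ 1 := (hδ n).2.le
  have hstep : ∀ n, 1 ≤ n → c (n + 1) = iterationStep S (δ n) (c n) := fun n hn ↦ by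
    rw [hc n hn, hb n hn, ha n hn, iterationStep]
  have hcJ : ∀ n, 1 ≤ n → c n ∈ J := fun n hn ↦ by
    induction n, hn using Nat.le_induction with
    | base => exact hc1
    | succ n hn ih =>
      rw [hstep n hn]
      exact iterationStep_mem hSJ hJconv (hδ_nonneg n) (hδ_le_one n) ih
  have hratio : 0 ≤ ξ ^ 2 * (1 - (1 - ξ) * δ₀) := by
    have : (1 - ξ) * δ₀ ≤ (1 - ξ) * 1 :=
      mul_le_mul_of_nonneg_left ((hδge 0).trans (hδ_le_one 0)) (by linarith)
    have : 0 ≤ 1 - (1 - ξ) * δ₀ := by linarith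
    positivity
  have hcontract : ∀ n, 1 ≤ n →
      ‖c (n + 1) - q‖ ≤ ξ ^ 2 * (1 - (1 - ξ) * δ₀) * ‖c n - q‖ := fun n hn ↦ by
    rw [hstep n hn]
    refine (norm_iterationStep_sub_le hSJ hJconv (hδ_nonneg n) (hδ_le_one n) hξ₀.le hS hqJ hq
      (hcJ n hn)).trans ?_
    gcongr
    nlinarith [hδge n]
  intro n _
  rw [pow_mul, ← mul_pow]
  exact le_geom (u := fun k ↦ ‖c (k + 1) - q‖) hratio n fun k _ ↦ hcontract (k + 1) k.succ_pos

/-- rate estimate for the new iteration (1.2) for a contraction. -/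
theorem stmt_0 {G : Type*} [NormedAddCommGroup G] [NormedSpace ℝ G] [CompleteSpace G]
    (J : Set G) (hJne : J.Nonempty) (hJcl : IsClosed J) (hJconv : Convex ℝ J)
    (S : G → G) (hSJ : ∀ x ∈ J, S x ∈ J)
    (ξ : ℝ) (hξ : ξ ∈ Set.Ioo (0 : ℝ) 1)
    (hS : ∀ u ∈ J, ∀ v ∈ J, ‖S u - S v‖ ≤ ξ * ‖u - v‖)
    (q : G) (hqJ : q ∈ J) (hq : S q = q)
    (δ : ℕ → ℝ) (hδ : ∀ n, δ n ∈ Set.Ioo (0 : ℝ) 1)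
    (δ₀ : ℝ) (hδ₀ : 0 < δ₀) (hδge : ∀ n, δ₀ ≤ δ n)
    (a b c : ℕ → G) (hc1 : c 1 ∈ J)
    (ha : ∀ n, 1 ≤ n → a n = S (c n))
    (hb : ∀ n, 1 ≤ n → b n = (1 - δ n) • a n + δ n • S (a n))
    (hc : ∀ n, 1 ≤ n → c (n + 1) = S (b n)) :
    ∀ n, 1 ≤ n →
      ‖c (n + 1) - q‖ ≤ ξ ^ (2 * n) * (1 - (1 - ξ) * δ₀) ^ n * ‖c 1 - q‖ :=
  stmt_0_general J hJconv S hSJ ξ hξ hS q hqJ hq δ hδ δ₀ hδge a b c hc1 ha hb hc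
end

section
/- Let J be a nonempty closed convex subset of a Banach space G and let S : J → J be a contraction with contraction factor ξ ∈ (0,1), and let q ∈ J be a fixed point of S. Let {δₙ} and {ζₙ} be sequences in (0,1) with δₙ ≥ δ > 0 and ζₙ ≥ ζ > 0 for all n, and let {wₙ} be generated from w₁ ∈ J by the Thakur iteration uₙ = (1−δₙ)wₙ + δₙ S wₙ, vₙ = S((1−ζₙ)wₙ + ζₙ uₙ), w_{n+1} = S vₙ. Then for all n ≥ 1, ‖w_{n+1} − q‖ ≤ ξ^{2n} (1 − (1−ξ)δζ)ⁿ ‖w₁ − q‖. -/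
/-!
Averaging `x` with a point that is `r` times as far from `q` shrinks the distance to `q` by the
factor `1 - (1 - r) t`. Applied twice, this shows that the inner point `(1 - ζₙ) wₙ + ζₙ uₙ` is
closer to `q` than `wₙ` by the factor `1 - (1 - ξ) δₙ ζₙ ≤ 1 - (1 - ξ) δ ζ`; the two outer
applications of `S` contribute `ξ²`, and iterating this one-step estimate gives the rate.
-/

section ThakurStep

variable {E : Type*} [NormedAddCommGroup E] [NormedSpace ℝ E]

theorem norm_convexCombination_sub_le {x y q : E} {t r : ℝ} (ht₀ : 0 ≤ t) (ht₁ : t ≤ 1)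
    (hy : ‖y - q‖ ≤ r * ‖x - q‖) :
    ‖(1 - t) • x + t • y - q‖ ≤ (1 - (1 - r) * t) * ‖x - q‖ :=
  calc ‖(1 - t) • x + t • y - q‖ = ‖(1 - t) • (x - q) + t • (y - q)‖ := by congr 1; module
    _ ≤ (1 - t) * ‖x - q‖ + t * ‖y - q‖ := by
        refine (norm_add_le _ _).trans_eq ?_
        rw [norm_smul_of_nonneg (sub_nonneg.2 ht₁), norm_smul_of_nonneg ht₀]
    _ ≤ (1 - t) * ‖x - q‖ + t * (r * ‖x - q‖) := by gcongr
    _ = (1 - (1 - r) * t) * ‖x - q‖ := by ring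

def thakurStep (S : E → E) (δ ζ : ℝ) (w : E) : E :=
  S (S ((1 - ζ) • w + ζ • ((1 - δ) • w + δ • S w)))

theorem Convex.one_sub_smul_add_smul_mem {J : Set E} (hJ : Convex ℝ J) {x y : E} (hx : x ∈ J)
    (hy : y ∈ J) {t : ℝ} (ht : t ∈ Set.Icc (0 : ℝ) 1) : (1 - t) • x + t • y ∈ J :=
  hJ hx hy (sub_nonneg.2 ht.2) ht.1 (sub_add_cancel 1 t)

variable {J : Set E} {S : E → E} {δ ζ : ℝ} {x : E}

theorem thakurStep_inner_mem (hJ : Convex ℝ J) (hSJ : ∀ x ∈ J, S x ∈ J)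
    (hδ : δ ∈ Set.Icc (0 : ℝ) 1) (hζ : ζ ∈ Set.Icc (0 : ℝ) 1) (hx : x ∈ J) :
    (1 - ζ) • x + ζ • ((1 - δ) • x + δ • S x) ∈ J :=
  hJ.one_sub_smul_add_smul_mem hx (hJ.one_sub_smul_add_smul_mem hx (hSJ x hx) hδ) hζ

theorem thakurStep_mem (hJ : Convex ℝ J) (hSJ : ∀ x ∈ J, S x ∈ J) (hδ : δ ∈ Set.Icc (0 : ℝ) 1)
    (hζ : ζ ∈ Set.Icc (0 : ℝ) 1) (hx : x ∈ J) : thakurStep S δ ζ x ∈ J :=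
  hSJ _ (hSJ _ (thakurStep_inner_mem hJ hSJ hδ hζ hx))

theorem norm_thakurStep_sub_le (hJ : Convex ℝ J) (hSJ : ∀ x ∈ J, S x ∈ J) {ξ : ℝ} (hξ : 0 ≤ ξ)
    (hS : ∀ u ∈ J, ∀ v ∈ J, ‖S u - S v‖ ≤ ξ * ‖u - v‖) {q : E} (hqJ : q ∈ J) (hq : S q = q)
    (hδ : δ ∈ Set.Icc (0 : ℝ) 1) (hζ : ζ ∈ Set.Icc (0 : ℝ) 1) (hx : x ∈ J) :
    ‖thakurStep S δ ζ x - q‖ ≤ ξ ^ 2 * (1 - (1 - ξ) * δ * ζ) * ‖x - q‖ := by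
  have hSq : ∀ y ∈ J, ‖S y - q‖ ≤ ξ * ‖y - q‖ := fun y hy ↦ by
    simpa only [hq] using hS y hy q hqJ
  have hu : ‖(1 - δ) • x + δ • S x - q‖ ≤ (1 - (1 - ξ) * δ) * ‖x - q‖ :=
    norm_convexCombination_sub_le hδ.1 hδ.2 (hSq x hx)
  have hm : ‖(1 - ζ) • x + ζ • ((1 - δ) • x + δ • S x) - q‖ ≤
      (1 - (1 - ξ) * δ * ζ) * ‖x - q‖ := by
    have := norm_convexCombination_sub_le hζ.1 hζ.2 hu
    rwa [sub_sub_cancel] at this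
  have hmJ := thakurStep_inner_mem hJ hSJ hδ hζ hx
  calc ‖thakurStep S δ ζ x - q‖ ≤ ξ * ‖S ((1 - ζ) • x + ζ • ((1 - δ) • x + δ • S x)) - q‖ :=
        hSq _ (hSJ _ hmJ)
    _ ≤ ξ * (ξ * ((1 - (1 - ξ) * δ * ζ) * ‖x - q‖)) := by
        gcongr
        exact (hSq _ hmJ).trans (by gcongr)
    _ = ξ ^ 2 * (1 - (1 - ξ) * δ * ζ) * ‖x - q‖ := by ring

end ThakurStep

theorem stmt_1_general {G : Type*} [NormedAddCommGroup G] [NormedSpace ℝ G]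
    (J : Set G) (hJconv : Convex ℝ J)
    (S : G → G) (hSJ : ∀ x ∈ J, S x ∈ J)
    (ξ : ℝ) (hξ : ξ ∈ Set.Ioo (0 : ℝ) 1)
    (hS : ∀ u ∈ J, ∀ v ∈ J, ‖S u - S v‖ ≤ ξ * ‖u - v‖)
    (q : G) (hqJ : q ∈ J) (hq : S q = q)
    (δ ζ : ℕ → ℝ) (hδ : ∀ n, δ n ∈ Set.Ioo (0 : ℝ) 1) (hζ : ∀ n, ζ n ∈ Set.Ioo (0 : ℝ) 1)
    (δ₀ ζ₀ : ℝ) (hζ₀ : 0 < ζ₀)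
    (hδge : ∀ n, δ₀ ≤ δ n) (hζge : ∀ n, ζ₀ ≤ ζ n)
    (u v w : ℕ → G) (hw1 : w 1 ∈ J)
    (hu : ∀ n, 1 ≤ n → u n = (1 - δ n) • w n + δ n • S (w n))
    (hv : ∀ n, 1 ≤ n → v n = S ((1 - ζ n) • w n + ζ n • u n))
    (hw : ∀ n, 1 ≤ n → w (n + 1) = S (v n)) :
    ∀ n, 1 ≤ n →
      ‖w (n + 1) - q‖ ≤ ξ ^ (2 * n) * (1 - (1 - ξ) * δ₀ * ζ₀) ^ n * ‖w 1 - q‖ := by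
  have hδI n : δ n ∈ Set.Icc (0 : ℝ) 1 := Set.Ioo_subset_Icc_self (hδ n)
  have hζI n : ζ n ∈ Set.Icc (0 : ℝ) 1 := Set.Ioo_subset_Icc_self (hζ n)
  have hw_succ n : w (n + 2) = thakurStep S (δ (n + 1)) (ζ (n + 1)) (w (n + 1)) := by
    rw [hw _ n.succ_pos, hv _ n.succ_pos, hu _ n.succ_pos, thakurStep]
  have hwJ n : w (n + 1) ∈ J := by
    induction n with
    | zero => exact hw1
    | succ n ih => rw [hw_succ]; exact thakurStep_mem hJconv hSJ (hδI _) (hζI _) ih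
  have hfactor n : 1 - (1 - ξ) * δ n * ζ n ≤ 1 - (1 - ξ) * δ₀ * ζ₀ := by
    have := mul_le_mul (hδge n) (hζge n) hζ₀.le (hδ n).1.le
    nlinarith [hξ.2]
  have hfactor_nonneg : 0 ≤ 1 - (1 - ξ) * δ₀ * ζ₀ := by
    refine le_trans ?_ (hfactor 0)
    have hδζ : δ 0 * ζ 0 ≤ 1 := mul_le_one₀ (hδI 0).2 (hζI 0).1 (hζI 0).2
    nlinarith [hξ.1, mul_pos (hδ 0).1 (hζ 0).1]
  intro n _
  have := le_geom (u := fun k ↦ ‖w (k + 1) - q‖) (c := ξ ^ 2 * (1 - (1 - ξ) * δ₀ * ζ₀))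
    (by positivity) n fun k _ ↦ by
    rw [hw_succ]
    refine (norm_thakurStep_sub_le hJconv hSJ hξ.1.le hS hqJ hq (hδI _) (hζI _) (hwJ k)).trans ?_
    gcongr ξ ^ 2 * ?_ * _
    exact hfactor _
  rwa [mul_pow, ← pow_mul] at this

/-- rate estimate for the Thakur iteration (1.1) for a contraction. -/
theorem stmt_1 {G : Type*} [NormedAddCommGroup G] [NormedSpace ℝ G] [CompleteSpace G]
    (J : Set G) (hJne : J.Nonempty) (hJcl : IsClosed J) (hJconv : Convex ℝ J)
    (S : G → G) (hSJ : ∀ x ∈ J, S x ∈ J)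
    (ξ : ℝ) (hξ : ξ ∈ Set.Ioo (0 : ℝ) 1)
    (hS : ∀ u ∈ J, ∀ v ∈ J, ‖S u - S v‖ ≤ ξ * ‖u - v‖)
    (q : G) (hqJ : q ∈ J) (hq : S q = q)
    (δ ζ : ℕ → ℝ) (hδ : ∀ n, δ n ∈ Set.Ioo (0 : ℝ) 1) (hζ : ∀ n, ζ n ∈ Set.Ioo (0 : ℝ) 1)
    (δ₀ ζ₀ : ℝ) (hδ₀ : 0 < δ₀) (hζ₀ : 0 < ζ₀)
    (hδge : ∀ n, δ₀ ≤ δ n) (hζge : ∀ n, ζ₀ ≤ ζ n)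
    (u v w : ℕ → G) (hw1 : w 1 ∈ J)
    (hu : ∀ n, 1 ≤ n → u n = (1 - δ n) • w n + δ n • S (w n))
    (hv : ∀ n, 1 ≤ n → v n = S ((1 - ζ n) • w n + ζ n • u n))
    (hw : ∀ n, 1 ≤ n → w (n + 1) = S (v n)) :
    ∀ n, 1 ≤ n →
      ‖w (n + 1) - q‖ ≤ ξ ^ (2 * n) * (1 - (1 - ξ) * δ₀ * ζ₀) ^ n * ‖w 1 - q‖ :=
  stmt_1_general J hJconv S hSJ ξ hξ hS q hqJ hq δ ζ hδ hζ δ₀ ζ₀ hζ₀ hδge hζge u v w hw1 hu hv hw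
end

section
/- Let ξ ∈ (0,1), δ ∈ (0,1), ζ ∈ (0,1) and A, B > 0 be real numbers. Define pₙ = ξ^{2n}(1 − (1−ξ)δ)ⁿ · A and rₙ = ξ^{2n}(1 − (1−ξ)δζ)ⁿ · B. Then pₙ/rₙ → 0 as n → ∞; that is, in the sense of Berinde, the bound for the new iteration (1.2) converges to zero faster than the bound for the Thakur iteration (1.1). -/
/-! After cancelling the common factor `ξ ^ (2 * n)`, the quotient is the geometric sequence
`(a / b) ^ n * (A / B)` with `0 < a = 1 - (1 - ξ) δ < b = 1 - (1 - ξ) δ ζ`, so it tends to zero. -/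

open Filter

theorem tendsto_pow_mul_div_pow_mul_atTop_nhds_zero {a b : ℝ} (ha : 0 ≤ a) (hab : a < b)
    (A B : ℝ) : Tendsto (fun n : ℕ => (a ^ n * A) / (b ^ n * B)) atTop (nhds 0) := by
  have hb : 0 < b := ha.trans_lt hab
  have hratio : a / b < 1 := (div_lt_one hb).2 hab
  have hgeom := (tendsto_pow_atTop_nhds_zero_of_lt_one (div_nonneg ha hb.le) hratio).mul_const
    (A / B)
  rw [zero_mul] at hgeom
  refine hgeom.congr fun n => ?_
  rw [div_pow, mul_div_mul_comm]

theorem tendsto_mul_pow_mul_div_mul_pow_mul_atTop_nhds_zero {u : ℕ → ℝ} (hu : ∀ n, u n ≠ 0)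
    {a b : ℝ} (ha : 0 ≤ a) (hab : a < b) (A B : ℝ) :
    Tendsto (fun n : ℕ => (u n * a ^ n * A) / (u n * b ^ n * B)) atTop (nhds 0) := by
  refine (tendsto_pow_mul_div_pow_mul_atTop_nhds_zero ha hab A B).congr fun n => ?_
  rw [mul_assoc, mul_assoc, mul_div_mul_left _ _ (hu n)]

theorem stmt_2_general (ξ δ ζ A B : ℝ)
    (hξ : ξ ∈ Set.Ioo (0 : ℝ) 1) (hδ : δ ∈ Set.Ioo (0 : ℝ) 1) (hζ : ζ ∈ Set.Ioo (0 : ℝ) 1) :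
    Tendsto
      (fun n : ℕ =>
        (ξ ^ (2 * n) * (1 - (1 - ξ) * δ) ^ n * A) /
          (ξ ^ (2 * n) * (1 - (1 - ξ) * δ * ζ) ^ n * B))
      atTop (nhds 0) := by
  obtain ⟨hξ0, hξ1⟩ := hξ
  obtain ⟨hδ0, hδ1⟩ := hδ
  have ht0 : 0 < (1 - ξ) * δ := mul_pos (by linarith) hδ0
  have ht1 : (1 - ξ) * δ < 1 := by nlinarith
  have htζ : (1 - ξ) * δ * ζ < (1 - ξ) * δ := mul_lt_of_lt_one_right ht0 hζ.2
  exact tendsto_mul_pow_mul_div_mul_pow_mul_atTop_nhds_zero (fun n => pow_ne_zero _ hξ0.ne')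
    (by linarith) (by linarith) A B

/-- the rate bound of the new iteration tends to zero faster
(in Berinde's sense) than the rate bound of the Thakur iteration. -/
theorem stmt_2 (ξ δ ζ A B : ℝ)
    (hξ : ξ ∈ Set.Ioo (0 : ℝ) 1) (hδ : δ ∈ Set.Ioo (0 : ℝ) 1) (hζ : ζ ∈ Set.Ioo (0 : ℝ) 1)
    (hA : 0 < A) (hB : 0 < B) :
    Tendsto
      (fun n : ℕ =>
        (ξ ^ (2 * n) * (1 - (1 - ξ) * δ) ^ n * A) /
          (ξ ^ (2 * n) * (1 - (1 - ξ) * δ * ζ) ^ n * B))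
      atTop (nhds 0) :=
  stmt_2_general ξ δ ζ A B hξ hδ hζ
end

section
/- Let J be a nonempty closed convex subset of a uniformly convex Banach space G and S : J → J a nonexpansive mapping whose fixed point set F(S) is nonempty. Let {δₙ} satisfy 0 < w ≤ δₙ ≤ v < 1 for some constants w, v, and let {cₙ} be generated by the iteration (1.2). Then lim_{n→∞} ‖S cₙ − cₙ‖ = 0. -/
/-!
The distances `‖aₙ - q‖` to a fixed point `q` decrease, since `bₙ` is a convex combination of
two points no farther from `q` than `aₙ`, and `aₙ₊₁ = S (S bₙ)`. In a uniformly convex space such a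
convex combination, with weights bounded away from `0` and `1`, is closer to `q` than `aₙ` by a
fixed amount as long as `‖S aₙ - aₙ‖` stays away from `0`; since the distances converge, this
forces `‖S aₙ - aₙ‖ → 0`, and nonexpansiveness gives `‖S cₙ₊₁ - cₙ₊₁‖ ≤ 3 ‖S aₙ - aₙ‖`.
-/

open Filter Topology

section UniformConvex

variable {E : Type*} [NormedAddCommGroup E] [NormedSpace ℝ E]

lemma norm_convexComb_le_of_le_half {x y : E} {R t : ℝ} (hx : ‖x‖ ≤ R) (ht₀ : 0 ≤ t)
    (ht : t ≤ 1 / 2) : ‖(1 - t) • x + t • y‖ ≤ (1 - 2 * t) * R + t * ‖x + y‖ :=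
  calc ‖(1 - t) • x + t • y‖ = ‖(1 - 2 * t) • x + t • (x + y)‖ := by congr 1; module
    _ ≤ ‖(1 - 2 * t) • x‖ + ‖t • (x + y)‖ := norm_add_le _ _
    _ = (1 - 2 * t) * ‖x‖ + t * ‖x + y‖ := by
      rw [norm_smul_of_nonneg (by linarith), norm_smul_of_nonneg ht₀]
    _ ≤ (1 - 2 * t) * R + t * ‖x + y‖ := by gcongr; linarith

variable (E) [UniformConvexSpace E] {ε : ℝ}

theorem exists_forall_norm_add_le_two_mul_sub_of_le (hε : 0 < ε) (r : ℝ) :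
    ∃ δ > 0, ∀ ⦃R : ℝ⦄, R ≤ r → ∀ ⦃x y : E⦄, ‖x‖ ≤ R → ‖y‖ ≤ R → ε ≤ ‖x - y‖ →
      ‖x + y‖ ≤ 2 * R - δ := by
  rcases le_or_gt r 0 with hr | hr
  · exact ⟨1, one_pos, fun R hR x y hx hy hxy => by linarith [norm_sub_le x y]⟩
  obtain ⟨δ, hδ, h⟩ := exists_forall_closed_ball_dist_add_le_two_sub E (div_pos hε hr)
  refine ⟨δ * (ε / 2), by positivity, fun R hRr x y hx hy hxy => ?_⟩
  have hR : ε / 2 ≤ R := by linarith [norm_sub_le x y]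
  have hR₀ : 0 < R := by linarith
  have hscale (z : E) : ‖R⁻¹ • z‖ = ‖z‖ / R := by
    rw [norm_smul_of_nonneg (by positivity), inv_mul_eq_div]
  have hunit := h (x := R⁻¹ • x) (by rwa [hscale, div_le_one hR₀])
    (y := R⁻¹ • y) (by rwa [hscale, div_le_one hR₀])
    (by rw [← smul_sub, hscale]; exact div_le_div₀ (norm_nonneg _) hxy hR₀ hRr)
  rw [← smul_add, hscale, div_le_iff₀ hR₀] at hunit
  nlinarith

theorem exists_forall_norm_convexComb_le_sub {m : ℝ} (hε : 0 < ε) (hm : 0 < m) (r : ℝ) :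
    ∃ ρ > 0, ∀ ⦃R : ℝ⦄, R ≤ r → ∀ ⦃x y : E⦄, ‖x‖ ≤ R → ‖y‖ ≤ R → ε ≤ ‖x - y‖ →
      ∀ ⦃t : ℝ⦄, m ≤ t → t ≤ 1 - m → ‖(1 - t) • x + t • y‖ ≤ R - ρ := by
  obtain ⟨δ, hδ, h⟩ := exists_forall_norm_add_le_two_mul_sub_of_le E hε r
  refine ⟨m * δ, by positivity, fun R hRr x y hx hy hxy t hmt htm => ?_⟩
  have hsum := h hRr hx hy hxy
  rcases le_total t (1 / 2) with ht | ht
  · calc ‖(1 - t) • x + t • y‖ ≤ (1 - 2 * t) * R + t * ‖x + y‖ :=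
          norm_convexComb_le_of_le_half hx (by linarith) ht
      _ ≤ (1 - 2 * t) * R + t * (2 * R - δ) := by gcongr; linarith
      _ ≤ R - m * δ := by nlinarith
  · calc ‖(1 - t) • x + t • y‖ = ‖(1 - (1 - t)) • y + (1 - t) • x‖ := by
          rw [sub_sub_cancel, add_comm]
      _ ≤ (1 - 2 * (1 - t)) * R + (1 - t) * ‖y + x‖ :=
          norm_convexComb_le_of_le_half hy (by linarith) (by linarith)
      _ ≤ (1 - 2 * (1 - t)) * R + (1 - t) * (2 * R - δ) := by
          rw [add_comm y x]; gcongr; linarith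
      _ ≤ R - m * δ := by nlinarith

variable {E}

theorem tendsto_norm_sub_of_norm_succ_le_convexComb {x y : ℕ → E} {t : ℕ → ℝ} {m : ℝ}
    (hm : 0 < m) (ht : ∀ n, m ≤ t n ∧ t n ≤ 1 - m) (hy : ∀ n, ‖y n‖ ≤ ‖x n‖)
    (hx : ∀ n, ‖x (n + 1)‖ ≤ ‖(1 - t n) • x n + t n • y n‖) :
    Tendsto (fun n => ‖x n - y n‖) atTop (𝓝 0) := by
  have hcomb (n : ℕ) : ‖(1 - t n) • x n + t n • y n‖ ≤ ‖x n‖ := by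
    simpa using convex_closedBall (0 : E) ‖x n‖ (x := x n) (y := y n) (by simp)
      (by simpa using hy n) (by linarith [ht n]) (by linarith [ht n]) (sub_add_cancel 1 (t n))
  have hanti : Antitone (fun n => ‖x n‖) :=
    antitone_nat_of_succ_le fun n => (hx n).trans (hcomb n)
  have hconv : Tendsto (fun n => ‖x n‖) atTop (𝓝 (⨅ n, ‖x n‖)) :=
    tendsto_atTop_ciInf hanti ⟨0, by rintro _ ⟨n, rfl⟩; exact norm_nonneg _⟩
  have hdecr : Tendsto (fun n => ‖x n‖ - ‖x (n + 1)‖) atTop (𝓝 0) := by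
    simpa using hconv.sub (hconv.comp (tendsto_add_atTop_nat 1))
  refine tendsto_order.2 ⟨fun a ha => .of_forall fun n => ha.trans_le (norm_nonneg _),
    fun ε hε => ?_⟩
  obtain ⟨ρ, hρ, hρx⟩ := exists_forall_norm_convexComb_le_sub E hε hm ‖x 0‖
  filter_upwards [hdecr.eventually (gt_mem_nhds hρ)] with n hn
  by_contra! hεn
  linarith [hx n, hρx (hanti n.zero_le) le_rfl (hy n) hεn (ht n).1 (ht n).2]

end UniformConvex

section Nonexpansive

variable {E : Type*} [NormedAddCommGroup E] {J : Set E} {S : E → E}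

lemma norm_map_map_sub_map_le_three_mul (hS : ∀ u ∈ J, ∀ v ∈ J, ‖S u - S v‖ ≤ ‖u - v‖)
    {a b : E} (ha : a ∈ J) (hb : b ∈ J) (hSb : S b ∈ J) (hba : ‖b - a‖ ≤ ‖S a - a‖) :
    ‖S (S b) - S b‖ ≤ 3 * ‖S a - a‖ := by
  have h₁ := hS _ hSb _ ha
  have h₂ := hS _ ha _ hb
  have h₃ := hS _ hb _ ha
  have := norm_sub_le_norm_sub_add_norm_sub (S (S b)) (S a) (S b)
  have := norm_sub_le_norm_sub_add_norm_sub (S b) (S a) a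
  rw [norm_sub_rev a b] at h₂
  linarith

end Nonexpansive

theorem stmt_4_general {G : Type*} [NormedAddCommGroup G] [NormedSpace ℝ G]
    [UniformConvexSpace G]
    (J : Set G) (hJconv : Convex ℝ J)
    (S : G → G) (hSJ : ∀ x ∈ J, S x ∈ J)
    (hS : ∀ u ∈ J, ∀ v ∈ J, ‖S u - S v‖ ≤ ‖u - v‖)
    (hFne : ∃ q ∈ J, S q = q)
    (δ : ℕ → ℝ) (w v : ℝ) (hw : 0 < w) (hv : v < 1)
    (hδ : ∀ n, w ≤ δ n ∧ δ n ≤ v)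
    (a b c : ℕ → G) (hc1 : c 1 ∈ J)
    (ha : ∀ n, 1 ≤ n → a n = S (c n))
    (hb : ∀ n, 1 ≤ n → b n = (1 - δ n) • a n + δ n • S (a n))
    (hc : ∀ n, 1 ≤ n → c (n + 1) = S (b n)) :
    Tendsto (fun n => ‖S (c n) - c n‖) atTop (nhds 0) := by
  obtain ⟨q, hqJ, hSq⟩ := hFne
  have hδ₀₁ (n : ℕ) : 0 ≤ δ n ∧ δ n ≤ 1 := ⟨hw.le.trans (hδ n).1, (hδ n).2.trans hv.le⟩
  have hab_mem (n : ℕ) (hn : 1 ≤ n) (hcn : c n ∈ J) : a n ∈ J ∧ b n ∈ J := by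
    have haJ : a n ∈ J := ha n hn ▸ hSJ _ hcn
    exact ⟨haJ, hb n hn ▸ hJconv haJ (hSJ _ haJ) (by linarith [hδ₀₁ n]) (hδ₀₁ n).1 (by ring)⟩
  have hcJ (n : ℕ) : c (n + 1) ∈ J := by
    induction n with
    | zero => exact hc1
    | succ n ih => rw [hc _ (by omega)]; exact hSJ _ (hab_mem _ (by omega) ih).2
  have hq (u : G) (hu : u ∈ J) : ‖S u - q‖ ≤ ‖u - q‖ := by simpa [hSq] using hS u hu q hqJ
  have hlim : Tendsto (fun n => ‖S (a (n + 1)) - a (n + 1)‖) atTop (𝓝 0) := by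
    have hm : 0 < min w (1 - v) := lt_min hw (sub_pos.2 hv)
    refine (tendsto_norm_sub_of_norm_succ_le_convexComb (x := fun n => a (n + 1) - q)
      (y := fun n => S (a (n + 1)) - q) (t := fun n => δ (n + 1)) hm
      (fun n => ⟨(min_le_left _ _).trans (hδ _).1,
        by linarith [min_le_right w (1 - v), hδ (n + 1)]⟩)
      (fun n => hq _ (hab_mem _ n.succ_pos (hcJ n)).1) (fun n => ?_)).congr fun n => ?_
    · obtain ⟨haJ, hbJ⟩ := hab_mem (n + 1) (by omega) (hcJ n)
      calc ‖a (n + 2) - q‖ ≤ ‖c (n + 2) - q‖ := by rw [ha _ (by omega)]; exact hq _ (hcJ _)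
        _ ≤ ‖b (n + 1) - q‖ := by rw [hc _ (by omega)]; exact hq _ hbJ
        _ = _ := by rw [hb _ (by omega)]; congr 1; module
    · rw [sub_sub_sub_cancel_right, norm_sub_rev]
  have hbound (n : ℕ) : ‖S (c (n + 2)) - c (n + 2)‖ ≤ 3 * ‖S (a (n + 1)) - a (n + 1)‖ := by
    obtain ⟨haJ, hbJ⟩ := hab_mem (n + 1) (by omega) (hcJ n)
    rw [hc (n + 1) (by omega)]
    refine norm_map_map_sub_map_le_three_mul hS haJ hbJ (hSJ _ hbJ) ?_
    rw [hb (n + 1) (by omega), show ∀ t : ℝ, ∀ u : G, (1 - t) • u + t • S u - u = t • (S u - u)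
      from fun t u => by module, norm_smul_of_nonneg (hδ₀₁ _).1]
    exact mul_le_of_le_one_left (norm_nonneg _) (hδ₀₁ _).2
  rw [← tendsto_add_atTop_iff_nat 2]
  exact squeeze_zero (fun _ => norm_nonneg _) hbound (by simpa using hlim.const_mul 3)

/-- for the iteration (1.2), ‖S cₙ - cₙ‖ → 0. -/
theorem stmt_4 {G : Type*} [NormedAddCommGroup G] [NormedSpace ℝ G] [CompleteSpace G]
    [UniformConvexSpace G]
    (J : Set G) (hJne : J.Nonempty) (hJcl : IsClosed J) (hJconv : Convex ℝ J)
    (S : G → G) (hSJ : ∀ x ∈ J, S x ∈ J)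
    (hS : ∀ u ∈ J, ∀ v ∈ J, ‖S u - S v‖ ≤ ‖u - v‖)
    (hFne : ∃ q ∈ J, S q = q)
    (δ : ℕ → ℝ) (w v : ℝ) (hw : 0 < w) (hv : v < 1)
    (hδ : ∀ n, w ≤ δ n ∧ δ n ≤ v)
    (a b c : ℕ → G) (hc1 : c 1 ∈ J)
    (ha : ∀ n, 1 ≤ n → a n = S (c n))
    (hb : ∀ n, 1 ≤ n → b n = (1 - δ n) • a n + δ n • S (a n))
    (hc : ∀ n, 1 ≤ n → c (n + 1) = S (b n)) :
    Tendsto (fun n => ‖S (c n) - c n‖) atTop (nhds 0) :=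
  stmt_4_general J hJconv S hSJ hS hFne δ w v hw hv hδ a b c hc1 ha hb hc
end

section
/- Let J be a nonempty closed convex subset of a uniformly convex Banach space G and S : J → J a nonexpansive mapping whose fixed point set F(S) is nonempty. Let {δₙ} satisfy 0 < w ≤ δₙ ≤ v < 1 for some constants w, v, and let {cₙ} be generated by the iteration (1.2) with aₙ = S cₙ. Then lim_{n→∞} ‖aₙ − S aₙ‖ = 0, i.e. lim_{n→∞} ‖S cₙ − S(S cₙ)‖ = 0. -/
/-!
Let `q` be a fixed point of `S`. As `S` is nonexpansive, no step of the iteration moves away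
from `q`, so `‖cₙ - q‖` decreases to some `d`, and `‖bₙ - q‖`, squeezed between `‖cₙ₊₁ - q‖` and
`‖cₙ - q‖`, tends to `d` too. But `bₙ - q = (1 - δₙ)(aₙ - q) + δₙ(S aₙ - q)` combines two points
of norm at most `‖cₙ - q‖` with weights bounded away from `0` and `1`; unless
`‖aₙ - S aₙ‖ → 0`, uniform convexity (Schu's lemma) keeps `‖bₙ - q‖` below `d` by a fixed factor
infinitely often.
-/

open Filter Set Topology

section UniformConvexity

variable {E : Type*} [SeminormedAddCommGroup E] [NormedSpace ℝ E]

/-- Groetsch's inequality. -/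
lemma norm_one_sub_smul_add_smul_le {x y : E} {R κ t : ℝ} (hx : ‖x‖ ≤ R) (hy : ‖y‖ ≤ R)
    (hxy : ‖x + y‖ ≤ 2 * R - κ) (ht₀ : 0 ≤ t) (ht₁ : t ≤ 1) :
    ‖(1 - t) • x + t • y‖ ≤ R - min t (1 - t) * κ := by
  wlog ht : t ≤ 1 / 2 generalizing x y t
  · have := this hy hx (by rwa [add_comm]) (sub_nonneg.2 ht₁) (by linarith) (by linarith)
    rwa [sub_sub_cancel, min_comm, add_comm] at this
  rw [min_eq_left (by linarith)]
  calc ‖(1 - t) • x + t • y‖ = ‖(1 - 2 * t) • x + t • (x + y)‖ := by congr 1; module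
    _ ≤ (1 - 2 * t) * ‖x‖ + t * ‖x + y‖ := by
      refine (norm_add_le _ _).trans_eq ?_
      rw [norm_smul_of_nonneg (by linarith), norm_smul_of_nonneg ht₀]
    _ ≤ (1 - 2 * t) * R + t * (2 * R - κ) := by gcongr; linarith
    _ = R - t * κ := by ring

variable [UniformConvexSpace E]

lemma exists_forall_norm_add_le_mul_two_sub {ε : ℝ} (hε : 0 < ε) :
    ∃ κ, 0 < κ ∧ ∀ ⦃R : ℝ⦄, 0 < R → ∀ ⦃x y : E⦄, ‖x‖ ≤ R → ‖y‖ ≤ R → R * ε ≤ ‖x - y‖ →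
      ‖x + y‖ ≤ R * (2 - κ) := by
  obtain ⟨κ, hκ, h⟩ := exists_forall_closed_ball_dist_add_le_two_sub E hε
  refine ⟨κ, hκ, fun R hR x y hx hy hxy => ?_⟩
  have hunit : ∀ z : E, ‖R⁻¹ • z‖ = ‖z‖ / R := fun z => by
    rw [norm_smul_of_nonneg (inv_nonneg.2 hR.le), inv_mul_eq_div]
  have := @h (R⁻¹ • x) (by rw [hunit, div_le_one hR]; exact hx) (R⁻¹ • y)
    (by rw [hunit, div_le_one hR]; exact hy) (by rw [← smul_sub, hunit, le_div_iff₀ hR]; linarith)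
  rwa [← smul_add, hunit, div_le_iff₀ hR, mul_comm] at this

/-- Schu's lemma. -/
theorem tendsto_norm_sub_of_tendsto_norm_one_sub_smul_add_smul {t : ℕ → ℝ} {w v : ℝ}
    (hw : 0 < w) (hv : v < 1) (ht : ∀ n, w ≤ t n ∧ t n ≤ v) {x y : ℕ → E} {r : ℕ → ℝ} {d : ℝ}
    (hr : Tendsto r atTop (𝓝 d)) (hx : ∀ᶠ n in atTop, ‖x n‖ ≤ r n)
    (hy : ∀ᶠ n in atTop, ‖y n‖ ≤ r n)
    (hxy : Tendsto (fun n => ‖(1 - t n) • x n + t n • y n‖) atTop (𝓝 d)) :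
    Tendsto (fun n => ‖x n - y n‖) atTop (𝓝 0) := by
  have hd : 0 ≤ d := ge_of_tendsto hr (hx.mono fun n hn => (norm_nonneg _).trans hn)
  rcases hd.eq_or_lt with rfl | hd
  · refine squeeze_zero' (Eventually.of_forall fun n => norm_nonneg _) ?_
      (by simpa using hr.const_mul 2)
    filter_upwards [hx, hy] with n hxn hyn
    linarith [norm_sub_le (x n) (y n)]
  rw [NormedAddGroup.tendsto_nhds_zero]
  intro ε hε
  obtain ⟨κ, hκ, hUC⟩ :=
    exists_forall_norm_add_le_mul_two_sub (E := E) (div_pos hε (by linarith : 0 < d + 1))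
  set m := min w (1 - v)
  have hm : 0 < m := lt_min hw (by linarith)
  have hgap : Tendsto (fun n => r n * (1 - m * κ)) atTop (𝓝 (d * (1 - m * κ))) :=
    hr.mul_const _
  -- Where `‖xₙ - yₙ‖ ≥ ε`, uniform convexity at radius `rₙ < d + 1` would give
  -- `‖(1 - tₙ) xₙ + tₙ yₙ‖ ≤ rₙ (1 - m κ)`, whose limit lies below `d`.
  filter_upwards [hx, hy, hr.eventually_lt_const (by linarith : d < d + 1),
    hr.eventually_const_lt hd, hgap.eventually_lt hxy (by nlinarith [mul_pos hm hκ])]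
    with n hxn hyn hrn hrpos hlt
  rw [norm_norm]
  by_contra! hfar
  have hsum : ‖x n + y n‖ ≤ 2 * r n - r n * κ := by
    refine (hUC hrpos hxn hyn ?_).trans_eq (by ring)
    calc r n * (ε / (d + 1)) ≤ ε := by
          rw [mul_div_assoc', div_le_iff₀ (by linarith)]; nlinarith
      _ ≤ ‖x n - y n‖ := hfar
  have hmt : m ≤ min (t n) (1 - t n) :=
    min_le_min (ht n).1 (by linarith [(ht n).2])
  have := norm_one_sub_smul_add_smul_le hxn hyn hsum (hw.le.trans (ht n).1) ((ht n).2.trans hv.le)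
  nlinarith [mul_le_mul_of_nonneg_right hmt (mul_pos hrpos hκ).le]

end UniformConvexity

lemma exists_tendsto_of_le_of_succ_le {r s : ℕ → ℝ} (hr : ∀ n, 0 ≤ r n) (hsr : ∀ n, s n ≤ r n)
    (hrs : ∀ n, r (n + 1) ≤ s n) : ∃ d, Tendsto r atTop (𝓝 d) ∧ Tendsto s atTop (𝓝 d) := by
  have hanti : Antitone r := antitone_nat_of_succ_le fun n => (hrs n).trans (hsr n)
  have hlim := tendsto_atTop_ciInf hanti ⟨0, by rintro _ ⟨n, rfl⟩; exact hr n⟩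
  exact ⟨_, hlim, tendsto_of_tendsto_of_tendsto_of_le_of_le
    ((tendsto_add_atTop_iff_nat 1).2 hlim) hlim hrs hsr⟩

section Iteration

variable {E : Type*} [SeminormedAddCommGroup E] [NormedSpace ℝ E]

lemma mem_of_iteration {J : Set E} (hJ : Convex ℝ J) {S : E → E} (hSJ : MapsTo S J J)
    {δ : ℕ → ℝ} (hδ : ∀ n, 0 ≤ δ n ∧ δ n ≤ 1) {a b c : ℕ → E} (hc₀ : c 0 ∈ J)
    (ha : ∀ n, a n = S (c n)) (hb : ∀ n, b n = (1 - δ n) • a n + δ n • S (a n))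
    (hc : ∀ n, c (n + 1) = S (b n)) (n : ℕ) : c n ∈ J ∧ a n ∈ J ∧ b n ∈ J := by
  have hcab : ∀ n, c n ∈ J → a n ∈ J ∧ b n ∈ J := fun n hcn =>
    have han : a n ∈ J := ha n ▸ hSJ hcn
    ⟨han, hb n ▸ hJ han (hSJ han) (sub_nonneg.2 (hδ n).2) (hδ n).1 (sub_add_cancel 1 _)⟩
  suffices ∀ n, c n ∈ J from ⟨this n, hcab n (this n)⟩
  intro n
  induction n with
  | zero => exact hc₀
  | succ n ih => exact hc n ▸ hSJ (hcab n ih).2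

theorem tendsto_norm_sub_apply_of_iteration [UniformConvexSpace E] {J : Set E}
    (hJ : Convex ℝ J) {S : E → E} (hSJ : MapsTo S J J)
    (hS : ∀ u ∈ J, ∀ v ∈ J, ‖S u - S v‖ ≤ ‖u - v‖) {q : E} (hqJ : q ∈ J) (hq : S q = q)
    {δ : ℕ → ℝ} {w v : ℝ} (hw : 0 < w) (hv : v < 1) (hδ : ∀ n, w ≤ δ n ∧ δ n ≤ v)
    {a b c : ℕ → E} (hc₀ : c 0 ∈ J) (ha : ∀ n, a n = S (c n))
    (hb : ∀ n, b n = (1 - δ n) • a n + δ n • S (a n)) (hc : ∀ n, c (n + 1) = S (b n)) :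
    Tendsto (fun n => ‖a n - S (a n)‖) atTop (𝓝 0) := by
  have hδ₀₁ : ∀ n, 0 ≤ δ n ∧ δ n ≤ 1 := fun n => ⟨hw.le.trans (hδ n).1, (hδ n).2.trans hv.le⟩
  have hmem := mem_of_iteration hJ hSJ hδ₀₁ hc₀ ha hb hc
  have hSq : ∀ x ∈ J, ‖S x - q‖ ≤ ‖x - q‖ := fun x hx => by simpa [hq] using hS x hx q hqJ
  have haq : ∀ n, ‖a n - q‖ ≤ ‖c n - q‖ := fun n => ha n ▸ hSq _ (hmem n).1
  have hSaq : ∀ n, ‖S (a n) - q‖ ≤ ‖c n - q‖ := fun n => (hSq _ (hmem n).2.1).trans (haq n)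
  have hbq : ∀ n, ‖b n - q‖ ≤ ‖c n - q‖ := fun n => by
    rw [hb n, ← mem_closedBall_iff_norm]
    exact convex_closedBall q _ (mem_closedBall_iff_norm.2 (haq n))
      (mem_closedBall_iff_norm.2 (hSaq n)) (sub_nonneg.2 (hδ₀₁ n).2) (hδ₀₁ n).1 (sub_add_cancel 1 _)
  have hcq : ∀ n, ‖c (n + 1) - q‖ ≤ ‖b n - q‖ := fun n => hc n ▸ hSq _ (hmem n).2.2
  obtain ⟨d, hcd, hbd⟩ :=
    exists_tendsto_of_le_of_succ_le (fun n => norm_nonneg (c n - q)) hbq hcq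
  have hcomb : ∀ n, b n - q = (1 - δ n) • (a n - q) + δ n • (S (a n) - q) := fun n => by
    rw [hb n]; module
  simpa using tendsto_norm_sub_of_tendsto_norm_one_sub_smul_add_smul hw hv hδ hcd
    (Eventually.of_forall haq) (Eventually.of_forall hSaq) (by simpa only [hcomb] using hbd)

end Iteration

theorem stmt_5_general {G : Type*} [NormedAddCommGroup G] [NormedSpace ℝ G]
    [UniformConvexSpace G]
    (J : Set G) (hJconv : Convex ℝ J)
    (S : G → G) (hSJ : ∀ x ∈ J, S x ∈ J)
    (hS : ∀ u ∈ J, ∀ v ∈ J, ‖S u - S v‖ ≤ ‖u - v‖)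
    (hFne : ∃ q ∈ J, S q = q)
    (δ : ℕ → ℝ) (w v : ℝ) (hw : 0 < w) (hv : v < 1)
    (hδ : ∀ n, w ≤ δ n ∧ δ n ≤ v)
    (a b c : ℕ → G) (hc1 : c 1 ∈ J)
    (ha : ∀ n, 1 ≤ n → a n = S (c n))
    (hb : ∀ n, 1 ≤ n → b n = (1 - δ n) • a n + δ n • S (a n))
    (hc : ∀ n, 1 ≤ n → c (n + 1) = S (b n)) :
    Tendsto (fun n => ‖a n - S (a n)‖) atTop (nhds 0) := by
  obtain ⟨q, hqJ, hq⟩ := hFne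
  exact (tendsto_add_atTop_iff_nat 1).1 <|
    tendsto_norm_sub_apply_of_iteration hJconv hSJ hS hqJ hq hw hv (fun n => hδ (n + 1)) hc1
      (fun n => ha (n + 1) (by omega)) (fun n => hb (n + 1) (by omega))
      (fun n => hc (n + 1) (by omega))

/-- for the iteration (1.2), ‖aₙ - S aₙ‖ → 0 where aₙ = S cₙ. -/
theorem stmt_5 {G : Type*} [NormedAddCommGroup G] [NormedSpace ℝ G] [CompleteSpace G]
    [UniformConvexSpace G]
    (J : Set G) (hJne : J.Nonempty) (hJcl : IsClosed J) (hJconv : Convex ℝ J)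
    (S : G → G) (hSJ : ∀ x ∈ J, S x ∈ J)
    (hS : ∀ u ∈ J, ∀ v ∈ J, ‖S u - S v‖ ≤ ‖u - v‖)
    (hFne : ∃ q ∈ J, S q = q)
    (δ : ℕ → ℝ) (w v : ℝ) (hw : 0 < w) (hv : v < 1)
    (hδ : ∀ n, w ≤ δ n ∧ δ n ≤ v)
    (a b c : ℕ → G) (hc1 : c 1 ∈ J)
    (ha : ∀ n, 1 ≤ n → a n = S (c n))
    (hb : ∀ n, 1 ≤ n → b n = (1 - δ n) • a n + δ n • S (a n))
    (hc : ∀ n, 1 ≤ n → c (n + 1) = S (b n)) :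
    Tendsto (fun n => ‖a n - S (a n)‖) atTop (nhds 0) :=
  stmt_5_general J hJconv S hSJ hS hFne δ w v hw hv hδ a b c hc1 ha hb hc
end

section
/- Let J be a nonempty closed convex subset of a uniformly convex Banach space G and S : J → J a nonexpansive mapping whose fixed point set F(S) is nonempty. Let {δₙ} satisfy 0 < w ≤ δₙ ≤ v < 1 for some constants w, v, and let {cₙ} be generated by the iteration (1.2). Then {cₙ} converges strongly to a point of F(S) if and only if liminf_{n→∞} d(cₙ, F(S)) = 0, where d(x, F(S)) = inf{‖x − q‖ : q ∈ F(S)}. -/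
/-!
Every fixed point `q` of `S` is at a nonincreasing distance from the iterates, since one step of the
iteration only applies `S` (which does not move points away from `q`) and takes a convex
combination. For such a Fejér monotone sequence, `d(cₙ, F(S))` is nonincreasing, so its liminf
is its limit, and `‖cₙ - cₘ‖ ≤ 2 d(cₙ, F(S))` for `n ≤ m`. Hence a vanishing liminf makes `(cₙ)`
Cauchy, and its limit lies in the closed set `F(S)`.
-/

open Filter Topology Metric Set

section Fejer

variable {α : Type*} [MetricSpace α] {F : Set α} {c : ℕ → α}

theorem antitone_infDist_of_fejer (hc : ∀ q ∈ F, Antitone fun n => dist (c n) q) :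
    Antitone fun n => infDist (c n) F := by
  intro n m hnm
  rcases F.eq_empty_or_nonempty with rfl | hF
  · simp
  exact (le_infDist hF).2 fun q hq => (infDist_le_dist_of_mem hq).trans (hc q hq hnm)

theorem tendsto_infDist_of_fejer (hc : ∀ q ∈ F, Antitone fun n => dist (c n) q)
    (h : liminf (fun n => infDist (c n) F) atTop = 0) :
    Tendsto (fun n => infDist (c n) F) atTop (𝓝 0) := by
  have hlim := tendsto_atTop_ciInf (antitone_infDist_of_fejer hc)
    ⟨0, by rintro _ ⟨n, rfl⟩; exact infDist_nonneg⟩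
  rwa [← hlim.liminf_eq, h] at hlim

theorem cauchySeq_of_fejer (hF : F.Nonempty) (hc : ∀ q ∈ F, Antitone fun n => dist (c n) q)
    (h : Tendsto (fun n => infDist (c n) F) atTop (𝓝 0)) : CauchySeq c := by
  refine cauchySeq_of_le_tendsto_0' (fun n => 2 * infDist (c n) F) (fun n m hnm => ?_)
    (by simpa using h.const_mul 2)
  have : dist (c n) (c m) / 2 ≤ infDist (c n) F := by
    refine (le_infDist hF).2 fun q hq => ?_
    have := dist_triangle_right (c n) (c m) q
    linarith [hc q hq hnm]
  linarith

theorem exists_tendsto_mem_iff_liminf_infDist_eq_zero [CompleteSpace α] (hFcl : IsClosed F)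
    (hF : F.Nonempty) (hc : ∀ q ∈ F, Antitone fun n => dist (c n) q) :
    (∃ q ∈ F, Tendsto c atTop (𝓝 q)) ↔ liminf (fun n => infDist (c n) F) atTop = 0 := by
  constructor
  · rintro ⟨q, hqF, hq⟩
    have := ((continuous_infDist_pt F).tendsto q).comp hq
    rw [infDist_zero_of_mem hqF] at this
    exact this.liminf_eq
  · intro h
    have hlim := tendsto_infDist_of_fejer hc h
    obtain ⟨x, hx⟩ := cauchySeq_tendsto_of_complete (cauchySeq_of_fejer hF hc hlim)
    have hx0 : infDist x F = 0 :=
      tendsto_nhds_unique (((continuous_infDist_pt F).tendsto x).comp hx) hlim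
    exact ⟨x, (hFcl.mem_iff_infDist_zero hF).2 hx0, hx⟩

end Fejer

theorem LipschitzOnWith.dist_le_of_fixed {α : Type*} [PseudoMetricSpace α] {J : Set α}
    {S : α → α} {x q : α} (hS : LipschitzOnWith 1 S J) (hx : x ∈ J) (hq : q ∈ J)
    (hSq : S q = q) : dist (S x) q ≤ dist x q := by
  simpa [hSq] using hS.dist_le_mul x hx q hq

section Iteration

variable {E : Type*} [NormedAddCommGroup E] [NormedSpace ℝ E] {J : Set E} {S : E → E}
  {t : ℝ} {x q : E}

/-- The step `cₙ ↦ cₙ₊₁ = S ((1 - δₙ) aₙ + δₙ S aₙ)`, `aₙ = S cₙ`, of iteration (1.2). -/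
def iterStep (S : E → E) (t : ℝ) (x : E) : E :=
  S ((1 - t) • S x + t • S (S x))

theorem mapsTo_iterStep (hJ : Convex ℝ J) (hSJ : MapsTo S J J) (ht : t ∈ Icc 0 1) :
    MapsTo (iterStep S t) J J := fun _ hx =>
  hSJ (hJ (hSJ hx) (hSJ (hSJ hx)) (sub_nonneg.2 ht.2) ht.1 (by ring))

theorem dist_iterStep_le (hS : LipschitzOnWith 1 S J) (hJ : Convex ℝ J) (hSJ : MapsTo S J J)
    (ht : t ∈ Icc 0 1) (hx : x ∈ J) (hq : q ∈ J) (hSq : S q = q) :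
    dist (iterStep S t x) q ≤ dist x q := by
  have hSx : dist (S x) q ≤ dist x q := hS.dist_le_of_fixed hx hq hSq
  have hSSx : dist (S (S x)) q ≤ dist x q :=
    (hS.dist_le_of_fixed (hSJ hx) hq hSq).trans hSx
  have hmid : (1 - t) • S x + t • S (S x) ∈ closedBall q (dist x q) :=
    convex_closedBall q _ (mem_closedBall.2 hSx) (mem_closedBall.2 hSSx)
      (sub_nonneg.2 ht.2) ht.1 (by ring)
  have hmidJ : (1 - t) • S x + t • S (S x) ∈ J :=
    hJ (hSJ hx) (hSJ (hSJ hx)) (sub_nonneg.2 ht.2) ht.1 (by ring)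
  exact (hS.dist_le_of_fixed hmidJ hq hSq).trans (mem_closedBall.1 hmid)

end Iteration

theorem stmt_8_general {G : Type*} [NormedAddCommGroup G] [NormedSpace ℝ G] [CompleteSpace G]
    (J : Set G) (hJcl : IsClosed J) (hJconv : Convex ℝ J)
    (S : G → G) (hSJ : ∀ x ∈ J, S x ∈ J)
    (hS : ∀ u ∈ J, ∀ v ∈ J, ‖S u - S v‖ ≤ ‖u - v‖)
    (hFne : ∃ q ∈ J, S q = q)
    (δ : ℕ → ℝ) (w v : ℝ) (hw : 0 < w) (hv : v < 1)
    (hδ : ∀ n, w ≤ δ n ∧ δ n ≤ v)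
    (a b c : ℕ → G) (hc1 : c 1 ∈ J)
    (ha : ∀ n, 1 ≤ n → a n = S (c n))
    (hb : ∀ n, 1 ≤ n → b n = (1 - δ n) • a n + δ n • S (a n))
    (hc : ∀ n, 1 ≤ n → c (n + 1) = S (b n)) :
    (∃ q, (q ∈ J ∧ S q = q) ∧ Tendsto c atTop (nhds q)) ↔
      liminf (fun n => Metric.infDist (c n) {q | q ∈ J ∧ S q = q}) atTop = 0 := by
  set F : Set G := {q | q ∈ J ∧ S q = q}
  have hS' : LipschitzOnWith 1 S J :=
    LipschitzOnWith.of_dist_le_mul fun x hx y hy => by simpa [dist_eq_norm] using hS x hx y hy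
  have hδ01 : ∀ n, δ n ∈ Icc 0 1 := fun n => ⟨by linarith [hδ n], by linarith [hδ n]⟩
  have hFcl : IsClosed F := hJcl.isClosed_eq hS'.continuousOn continuousOn_id
  have hstep : ∀ n, c (n + 1 + 1) = iterStep S (δ (n + 1)) (c (n + 1)) := fun n => by
    rw [hc _ (by omega), hb _ (by omega), ha _ (by omega), iterStep]
  have hcJ : ∀ n, c (n + 1) ∈ J := fun n => by
    induction n with
    | zero => exact hc1
    | succ n ih => exact hstep n ▸ mapsTo_iterStep hJconv hSJ (hδ01 _) ih
  have hfejer : ∀ q ∈ F, Antitone fun n => dist (c (n + 1)) q := fun q hq =>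
    antitone_nat_of_succ_le fun n =>
      hstep n ▸ dist_iterStep_le hS' hJconv hSJ (hδ01 _) (hcJ n) hq.1 hq.2
  have key := exists_tendsto_mem_iff_liminf_infDist_eq_zero hFcl hFne hfejer
  rw [← liminf_nat_add _ 1]
  simp only [tendsto_add_atTop_iff_nat] at key
  exact key

/-- the iteration (1.2) converges strongly to a fixed point of `S`
iff `liminf d(cₙ, F(S)) = 0`. -/
theorem stmt_8 {G : Type*} [NormedAddCommGroup G] [NormedSpace ℝ G] [CompleteSpace G]
    [UniformConvexSpace G]
    (J : Set G) (hJne : J.Nonempty) (hJcl : IsClosed J) (hJconv : Convex ℝ J)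
    (S : G → G) (hSJ : ∀ x ∈ J, S x ∈ J)
    (hS : ∀ u ∈ J, ∀ v ∈ J, ‖S u - S v‖ ≤ ‖u - v‖)
    (hFne : ∃ q ∈ J, S q = q)
    (δ : ℕ → ℝ) (w v : ℝ) (hw : 0 < w) (hv : v < 1)
    (hδ : ∀ n, w ≤ δ n ∧ δ n ≤ v)
    (a b c : ℕ → G) (hc1 : c 1 ∈ J)
    (ha : ∀ n, 1 ≤ n → a n = S (c n))
    (hb : ∀ n, 1 ≤ n → b n = (1 - δ n) • a n + δ n • S (a n))
    (hc : ∀ n, 1 ≤ n → c (n + 1) = S (b n)) :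
    (∃ q, (q ∈ J ∧ S q = q) ∧ Tendsto c atTop (nhds q)) ↔
      liminf (fun n => Metric.infDist (c n) {q | q ∈ J ∧ S q = q}) atTop = 0 :=
  stmt_8_general J hJcl hJconv S hSJ hS hFne δ w v hw hv hδ a b c hc1 ha hb hc
end

section
/- Let D = [g₁,h₁] × ⋯ × [gₘ,hₘ] ⊂ ℝᵐ with gᵢ < hᵢ, let j ∈ D, and let K, H : D × D × ℝ → ℝ and F : D × ℝ³ → ℝ be continuous. Assume there exist nonnegative constants α, β, γ such that |F(t,u₁,v₁,w₁) − F(t,u₂,v₂,w₂)| ≤ α|u₁−u₂| + β|v₁−v₂| + γ|w₁−w₂| for all t ∈ D and all uᵢ,vᵢ,wᵢ ∈ ℝ; there exist nonnegative constants L_K, L_H with |K(t,s,u) − K(t,s,v)| ≤ L_K|u−v| and |H(t,s,u) − H(t,s,v)| ≤ L_H|u−v| for all t,s ∈ D, u,v ∈ ℝ; and α + (β L_K + γ L_H)∏ᵢ(hᵢ−gᵢ) < 1. Then the equation x(t) = F(t, x(t), ∫_{[g,j]} K(t,s,x(s)) ds, ∫_{[g,h]} H(t,s,x(s)) ds) has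 a unique solution p in the space C(D) of continuous real-valued functions on D. -/
open MeasureTheory Set
open scoped NNReal

/-! The right-hand side `x ↦ F(t, x t, ∫_{[g,j]} K(t,s,x s), ∫_{[g,h]} H(t,s,x s))` sends
functions continuous on `D` to functions continuous on `D`, and the Lipschitz hypotheses make it
Lipschitz for the sup norm on `D` with constant `α + (β L_K + γ L_H) vol D`, as `[g,j] ⊆ D`.
This constant is `< 1`, so Banach's fixed point theorem in `C(D)` gives exactly one solution. -/

theorem exists_continuousOn_fixedPoint_of_contraction {E : Type*} [TopologicalSpace E]
    {D : Set E} (hD : IsCompact D) {R : (E → ℝ) → E → ℝ} {c : ℝ≥0} (hc : c < 1)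
    (hR : ∀ x, ContinuousOn x D → ContinuousOn (R x) D)
    (hRlip : ∀ x y, ContinuousOn x D → ContinuousOn y D → ∀ d : ℝ,
      (∀ s ∈ D, |x s - y s| ≤ d) → ∀ t ∈ D, |R x t - R y t| ≤ c * d) :
    ∃ p : E → ℝ, ContinuousOn p D ∧ (∀ t ∈ D, p t = R p t) ∧
      ∀ x : E → ℝ, ContinuousOn x D → (∀ t ∈ D, x t = R x t) → EqOn x p D := by
  have := isCompact_iff_compactSpace.mp hD
  let ext (φ : C(D, ℝ)) : E → ℝ := Function.extend Subtype.val φ 0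
  have ext_apply (φ : C(D, ℝ)) (t : D) : ext φ t = φ t :=
    Subtype.val_injective.extend_apply _ _ t
  have ext_continuousOn (φ : C(D, ℝ)) : ContinuousOn (ext φ) D := by
    rw [continuousOn_iff_continuous_domRestrict]
    convert φ.continuous
    exact funext (ext_apply φ)
  let T (φ : C(D, ℝ)) : C(D, ℝ) :=
    ⟨D.domRestrict (R (ext φ)), (hR _ (ext_continuousOn φ)).domRestrict⟩
  have hT : ContractingWith c T := by
    refine ⟨hc, LipschitzWith.of_dist_le_mul fun φ ψ => ?_⟩
    refine (ContinuousMap.dist_le (by positivity)).2 fun t => ?_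
    refine hRlip _ _ (ext_continuousOn φ) (ext_continuousOn ψ) _ (fun s hs => ?_) t t.2
    rw [ext_apply φ ⟨s, hs⟩, ext_apply ψ ⟨s, hs⟩, ← Real.dist_eq]
    exact ContinuousMap.dist_apply_le_dist _
  refine ⟨ext (hT.fixedPoint T), ext_continuousOn _, fun t ht => ?_, fun x hx hxR t ht => ?_⟩
  · rw [ext_apply _ ⟨t, ht⟩]
    exact (DFunLike.congr_fun hT.fixedPoint_isFixedPt ⟨t, ht⟩).symm
  · let x' : C(D, ℝ) := ⟨D.domRestrict x, hx.domRestrict⟩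
    have ext_x' : ∀ s ∈ D, ext x' s = x s := fun s hs => ext_apply x' ⟨s, hs⟩
    have hx' : Function.IsFixedPt T x' := by
      ext s
      -- `R` only sees values on `D`: apply the Lipschitz bound with `d = 0`.
      have := hRlip _ _ (ext_continuousOn x') hx 0 (fun r hr => by simp [ext_x' r hr]) s s.2
      change R (ext x') s = x s
      rw [hxR s s.2]
      simpa [sub_eq_zero] using this
    rw [← ext_x' t ht, hT.fixedPoint_unique hx']

section projIccPi

variable {ι α : Type*} [LinearOrder α] {g h : ι → α}

def projIccPi (hgh : g ≤ h) (s : ι → α) : Icc g h :=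
  ⟨fun i => projIcc (g i) (h i) (hgh i) (s i),
    fun i => (projIcc (g i) (h i) (hgh i) (s i)).2.1,
    fun i => (projIcc (g i) (h i) (hgh i) (s i)).2.2⟩

theorem projIccPi_of_mem (hgh : g ≤ h) {s : ι → α} (hs : s ∈ Icc g h) :
    projIccPi hgh s = ⟨s, hs⟩ := by
  ext i
  exact congrArg Subtype.val (projIcc_of_mem (hgh i) ⟨hs.1 i, hs.2 i⟩)

theorem continuous_projIccPi [TopologicalSpace α] [OrderTopology α] (hgh : g ≤ h) :
    Continuous (projIccPi hgh) :=
  (continuous_pi fun i => continuous_subtype_val.comp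
    (continuous_projIcc.comp (continuous_apply i))).subtype_mk _

end projIccPi

section ParametricIntegral

variable {ι : Type*} [Fintype ι] {G : (ι → ℝ) → (ι → ℝ) → ℝ → ℝ} {x y : (ι → ℝ) → ℝ}
  {D S : Set (ι → ℝ)}

theorem integrableOn_of_continuousOn_uncurry
    (hG : ContinuousOn (fun p : (ι → ℝ) × (ι → ℝ) × ℝ => G p.1 p.2.1 p.2.2) (D ×ˢ D ×ˢ univ))
    (hS : IsCompact S) (hSD : S ⊆ D) (hx : ContinuousOn x D) {t : ι → ℝ} (ht : t ∈ D) :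
    IntegrableOn (fun s => G t s (x s)) S :=
  ((hG.comp (continuousOn_const.prodMk (continuousOn_id.prodMk hx))
    fun _ hs => ⟨ht, hs, trivial⟩).mono hSD).integrableOn_compact hS

theorem abs_setIntegral_sub_le_of_lipschitz
    (hG : ContinuousOn (fun p : (ι → ℝ) × (ι → ℝ) × ℝ => G p.1 p.2.1 p.2.2) (D ×ˢ D ×ˢ univ))
    {L : ℝ} (hL : 0 ≤ L) (hGL : ∀ t ∈ D, ∀ s ∈ D, ∀ u v : ℝ, |G t s u - G t s v| ≤ L * |u - v|)
    (hS : IsCompact S) (hSD : S ⊆ D) (hx : ContinuousOn x D) (hy : ContinuousOn y D)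
    {d : ℝ} (hd : ∀ s ∈ D, |x s - y s| ≤ d) {t : ι → ℝ} (ht : t ∈ D) :
    |(∫ s in S, G t s (x s)) - ∫ s in S, G t s (y s)| ≤ L * d * volume.real S := by
  rw [← integral_sub (integrableOn_of_continuousOn_uncurry hG hS hSD hx ht)
    (integrableOn_of_continuousOn_uncurry hG hS hSD hy ht), ← Real.norm_eq_abs]
  refine norm_setIntegral_le_of_norm_le_const (hS.measure_lt_top (μ := volume)) fun s hs => ?_
  exact (hGL t ht s (hSD hs) _ _).trans (mul_le_mul_of_nonneg_left (hd s (hSD hs)) hL)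

/-- Retracting onto the box makes the integrand jointly continuous on `D × ℝⁿ`, so the continuity
of parametric integrals over compact sets applies. -/
theorem continuousOn_setIntegral_of_continuousOn_uncurry {g h : ι → ℝ} (hgh : g ≤ h)
    (hG : ContinuousOn (fun p : (ι → ℝ) × (ι → ℝ) × ℝ => G p.1 p.2.1 p.2.2)
      (Icc g h ×ˢ Icc g h ×ˢ univ))
    (hS : IsCompact S) (hSD : S ⊆ Icc g h) (hx : ContinuousOn x (Icc g h)) :
    ContinuousOn (fun t => ∫ s in S, G t s (x s)) (Icc g h) := by
  rw [continuousOn_iff_continuous_domRestrict]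
  set P := projIccPi hgh
  have hP : Continuous P := continuous_projIccPi hgh
  have hxP : Continuous fun s => x (P s) := hx.comp_continuous hP.subtype_val fun s => (P s).2
  have hGP : Continuous fun p : Icc g h × (ι → ℝ) => G p.1 (P p.2) (x (P p.2)) :=
    hG.comp_continuous
      (f := fun p : Icc g h × (ι → ℝ) => ((p.1 : ι → ℝ), (P p.2 : ι → ℝ), x (P p.2)))
      ((continuous_subtype_val.comp continuous_fst).prodMk
        ((continuous_subtype_val.comp (hP.comp continuous_snd)).prodMk (hxP.comp continuous_snd)))
      fun p => ⟨p.1.2, (P p.2).2, trivial⟩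
  refine (continuous_parametric_integral_of_continuous
    (f := fun (t : Icc g h) s => G t (P s) (x (P s))) hGP hS).congr
    fun t => setIntegral_congr_fun hS.measurableSet fun s hs => ?_
  simp only [P, projIccPi_of_mem hgh (hSD hs)]

end ParametricIntegral

section VolterraFredholm

variable {ι : Type*} [Fintype ι] {g h : ι → ℝ} {S : Set (ι → ℝ)}
  {K H : (ι → ℝ) → (ι → ℝ) → ℝ → ℝ} {F : (ι → ℝ) → ℝ → ℝ → ℝ → ℝ} {x y : (ι → ℝ) → ℝ}

noncomputable def volterraFredholmOp (D S : Set (ι → ℝ)) (K H : (ι → ℝ) → (ι → ℝ) → ℝ → ℝ)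
    (F : (ι → ℝ) → ℝ → ℝ → ℝ → ℝ) (x : (ι → ℝ) → ℝ) (t : ι → ℝ) : ℝ :=
  F t (x t) (∫ s in S, K t s (x s)) (∫ s in D, H t s (x s))

theorem continuousOn_volterraFredholmOp (hgh : g ≤ h) (hS : IsCompact S) (hSD : S ⊆ Icc g h)
    (hK : ContinuousOn (fun p : (ι → ℝ) × (ι → ℝ) × ℝ => K p.1 p.2.1 p.2.2)
      (Icc g h ×ˢ Icc g h ×ˢ univ))
    (hH : ContinuousOn (fun p : (ι → ℝ) × (ι → ℝ) × ℝ => H p.1 p.2.1 p.2.2)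
      (Icc g h ×ˢ Icc g h ×ˢ univ))
    (hF : ContinuousOn (fun p : (ι → ℝ) × ℝ × ℝ × ℝ => F p.1 p.2.1 p.2.2.1 p.2.2.2)
      (Icc g h ×ˢ univ))
    (hx : ContinuousOn x (Icc g h)) :
    ContinuousOn (volterraFredholmOp (Icc g h) S K H F x) (Icc g h) :=
  hF.comp (continuousOn_id.prodMk (hx.prodMk
    ((continuousOn_setIntegral_of_continuousOn_uncurry hgh hK hS hSD hx).prodMk
      (continuousOn_setIntegral_of_continuousOn_uncurry hgh hH isCompact_Icc subset_rfl hx))))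
    fun _ ht => ⟨ht, trivial⟩

theorem abs_volterraFredholmOp_sub_le (hgh : g ≤ h) (hS : IsCompact S) (hSD : S ⊆ Icc g h)
    (hKc : ContinuousOn (fun p : (ι → ℝ) × (ι → ℝ) × ℝ => K p.1 p.2.1 p.2.2)
      (Icc g h ×ˢ Icc g h ×ˢ univ))
    (hHc : ContinuousOn (fun p : (ι → ℝ) × (ι → ℝ) × ℝ => H p.1 p.2.1 p.2.2)
      (Icc g h ×ˢ Icc g h ×ˢ univ))
    {α β γ : ℝ} (hα : 0 ≤ α) (hβ : 0 ≤ β) (hγ : 0 ≤ γ)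
    (hF : ∀ t ∈ Icc g h, ∀ u₁ v₁ w₁ u₂ v₂ w₂ : ℝ,
      |F t u₁ v₁ w₁ - F t u₂ v₂ w₂| ≤ α * |u₁ - u₂| + β * |v₁ - v₂| + γ * |w₁ - w₂|)
    {L_K L_H : ℝ} (hLK : 0 ≤ L_K) (hLH : 0 ≤ L_H)
    (hK : ∀ t ∈ Icc g h, ∀ s ∈ Icc g h, ∀ u v : ℝ, |K t s u - K t s v| ≤ L_K * |u - v|)
    (hH : ∀ t ∈ Icc g h, ∀ s ∈ Icc g h, ∀ u v : ℝ, |H t s u - H t s v| ≤ L_H * |u - v|)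
    (hx : ContinuousOn x (Icc g h)) (hy : ContinuousOn y (Icc g h))
    {d : ℝ} (hd : ∀ s ∈ Icc g h, |x s - y s| ≤ d) {t : ι → ℝ} (ht : t ∈ Icc g h) :
    |volterraFredholmOp (Icc g h) S K H F x t - volterraFredholmOp (Icc g h) S K H F y t| ≤
      (α + (β * L_K + γ * L_H) * ∏ i, (h i - g i)) * d := by
  have hd0 : 0 ≤ d := (abs_nonneg _).trans (hd t ht)
  have hvol : volume.real (Icc g h) = ∏ i, (h i - g i) := Real.volume_Icc_pi_toReal hgh
  have hvolS : volume.real S ≤ ∏ i, (h i - g i) :=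
    hvol ▸ measureReal_mono hSD isCompact_Icc.measure_ne_top
  have hKS := abs_setIntegral_sub_le_of_lipschitz hKc hLK hK hS hSD hx hy hd ht
  have hHD := abs_setIntegral_sub_le_of_lipschitz hHc hLH hH isCompact_Icc subset_rfl hx hy hd ht
  rw [hvol] at hHD
  calc _ ≤ α * |x t - y t| + β * |(∫ s in S, K t s (x s)) - ∫ s in S, K t s (y s)|
        + γ * |(∫ s in Icc g h, H t s (x s)) - ∫ s in Icc g h, H t s (y s)| := hF t ht ..
    _ ≤ α * d + β * (L_K * d * ∏ i, (h i - g i)) + γ * (L_H * d * ∏ i, (h i - g i)) := by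
        gcongr
        · exact hd t ht
        · exact hKS.trans (by gcongr)
    _ = (α + (β * L_K + γ * L_H) * ∏ i, (h i - g i)) * d := by ring

end VolterraFredholm

/-- existence and uniqueness of a continuous solution of the mixed type
Volterra–Fredholm functional nonlinear integral equation (5.1) on the box
`D = [g₁,h₁] × ⋯ × [gₘ,hₘ]`. -/
theorem stmt_11 {m : ℕ} (g h j : Fin m → ℝ)
    (hgh : ∀ i, g i < h i) (hj : j ∈ Set.Icc g h)
    (K H : (Fin m → ℝ) → (Fin m → ℝ) → ℝ → ℝ)
    (F : (Fin m → ℝ) → ℝ → ℝ → ℝ → ℝ)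
    (hKcont : ContinuousOn (fun p : (Fin m → ℝ) × (Fin m → ℝ) × ℝ => K p.1 p.2.1 p.2.2)
      (Set.Icc g h ×ˢ Set.Icc g h ×ˢ Set.univ))
    (hHcont : ContinuousOn (fun p : (Fin m → ℝ) × (Fin m → ℝ) × ℝ => H p.1 p.2.1 p.2.2)
      (Set.Icc g h ×ˢ Set.Icc g h ×ˢ Set.univ))
    (hFcont : ContinuousOn (fun p : (Fin m → ℝ) × ℝ × ℝ × ℝ => F p.1 p.2.1 p.2.2.1 p.2.2.2)
      (Set.Icc g h ×ˢ Set.univ))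
    (α β γ : ℝ) (hα : 0 ≤ α) (hβ : 0 ≤ β) (hγ : 0 ≤ γ)
    (hF : ∀ t ∈ Set.Icc g h, ∀ u₁ v₁ w₁ u₂ v₂ w₂ : ℝ,
      |F t u₁ v₁ w₁ - F t u₂ v₂ w₂| ≤ α * |u₁ - u₂| + β * |v₁ - v₂| + γ * |w₁ - w₂|)
    (L_K L_H : ℝ) (hLK : 0 ≤ L_K) (hLH : 0 ≤ L_H)
    (hK : ∀ t ∈ Set.Icc g h, ∀ s ∈ Set.Icc g h, ∀ u v : ℝ,
      |K t s u - K t s v| ≤ L_K * |u - v|)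
    (hH : ∀ t ∈ Set.Icc g h, ∀ s ∈ Set.Icc g h, ∀ u v : ℝ,
      |H t s u - H t s v| ≤ L_H * |u - v|)
    (hcontr : α + (β * L_K + γ * L_H) * ∏ i, (h i - g i) < 1) :
    ∃ p : (Fin m → ℝ) → ℝ, ContinuousOn p (Set.Icc g h) ∧
      (∀ t ∈ Set.Icc g h,
        p t = F t (p t) (∫ s in Set.Icc g j, K t s (p s)) (∫ s in Set.Icc g h, H t s (p s))) ∧
      ∀ x : (Fin m → ℝ) → ℝ, ContinuousOn x (Set.Icc g h) →
        (∀ t ∈ Set.Icc g h,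
          x t = F t (x t) (∫ s in Set.Icc g j, K t s (x s)) (∫ s in Set.Icc g h, H t s (x s))) →
        Set.EqOn x p (Set.Icc g h) := by
  have hgh' : g ≤ h := fun i => (hgh i).le
  have hJD : Icc g j ⊆ Icc g h := Icc_subset_Icc le_rfl hj.2
  have hc : 0 ≤ α + (β * L_K + γ * L_H) * ∏ i, (h i - g i) := by
    have : 0 ≤ ∏ i, (h i - g i) := Finset.prod_nonneg fun i _ => sub_nonneg.2 (hgh' i)
    positivity
  exact exists_continuousOn_fixedPoint_of_contraction isCompact_Icc (c := ⟨_, hc⟩) hcontr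
    (fun x hx => continuousOn_volterraFredholmOp hgh' isCompact_Icc hJD hKcont hHcont hFcont hx)
    fun x y hx hy d hd t ht => abs_volterraFredholmOp_sub_le hgh' isCompact_Icc hJD hKcont
      hHcont hα hβ hγ hF hLK hLH hK hH hx hy hd ht
end

section
/- Let D = [g₁,h₁] × ⋯ × [gₘ,hₘ] ⊂ ℝᵐ with gᵢ < hᵢ, let j ∈ D, and let K, H : D × D × ℝ → ℝ and F : D × ℝ³ → ℝ be continuous functions satisfying: |F(t,u₁,v₁,w₁) − F(t,u₂,v₂,w₂)| ≤ α|u₁−u₂| + β|v₁−v₂| + γ|w₁−w₂| for nonnegative constants α, β, γ; |K(t,s,u) − K(t,s,v)| ≤ L_K|u−v| and |H(t,s,u) − H(t,s,v)| ≤ L_H|u−v| for nonnegative constants L_K, L_H. Define the operator A on C(D) by (Ax)(t) = F(t, x(t), ∫_{[g,j]} K(t,s,x(s)) ds, ∫_{[g,h]} H(t,s,x(s)) ds). Then for all x, y ∈ C(D), ‖Ax − Ay‖ ≤ (α + (β L_K + γ L_H)∏ᵢ(hᵢ−gᵢ)) ‖x − y‖, where ‖·‖ is the supremum norm; i.e.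 A is Lipschitz with constant α + (β L_K + γ L_H)∏ᵢ(hᵢ−gᵢ). -/
/-!
Write `M = sup_D |x - y|`. At each `t ∈ D` the Lipschitz bound on `F` splits `|Ax(t) - Ay(t)|`
into three terms. The first is at most `α M`. For the two integral terms the Lipschitz bounds on
`K` and `H` bound the integrands' difference by `L_K M` and `L_H M`, so each integral difference
is at most that constant times the volume of its domain, and both `[g, j]` and `[g, h]` have
volume at most `∏ᵢ (hᵢ - gᵢ)`.
-/

open MeasureTheory Set

theorem ContinuousOn.le_ciSup_of_isCompact {X : Type*} [TopologicalSpace X] {T : Set X}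
    {f : X → ℝ} (hT : IsCompact T) (hf : ContinuousOn f T) {x : X} (hx : x ∈ T) :
    f x ≤ ⨆ t : T, f t := by
  have hbdd : BddAbove (range fun t : T => f t) := by
    simpa only [image_eq_range] using hT.bddAbove_image hf
  exact le_ciSup hbdd ⟨x, hx⟩

theorem abs_setIntegral_sub_le_of_abs_sub_le {Y : Type*} [MeasurableSpace Y] {μ : Measure Y}
    {s : Set Y} {f₁ f₂ : Y → ℝ} {C : ℝ} (hs : μ s < ⊤)
    (hf₁ : IntegrableOn f₁ s μ) (hf₂ : IntegrableOn f₂ s μ)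
    (hC : ∀ y ∈ s, |f₁ y - f₂ y| ≤ C) :
    |∫ y in s, f₁ y ∂μ - ∫ y in s, f₂ y ∂μ| ≤ C * μ.real s := by
  rw [← integral_sub hf₁ hf₂]
  exact norm_setIntegral_le_of_norm_le_const (f := fun y => f₁ y - f₂ y) hs hC

section Kernel

variable {X Y : Type*} [TopologicalSpace X] [TopologicalSpace Y]
  {K : X → Y → ℝ → ℝ} {S : Set X} {T : Set Y} {t : X}

theorem ContinuousOn.kernel_apply
    (hK : ContinuousOn (fun p : X × Y × ℝ => K p.1 p.2.1 p.2.2) (S ×ˢ T ×ˢ univ))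
    (ht : t ∈ S) {z : Y → ℝ} (hz : ContinuousOn z T) :
    ContinuousOn (fun s => K t s (z s)) T :=
  hK.comp (continuousOn_const.prodMk (continuousOn_id.prodMk hz))
    fun _ hs => ⟨ht, hs, mem_univ _⟩

theorem abs_setIntegral_kernel_sub_le [MeasurableSpace Y] [OpensMeasurableSpace Y] [T2Space Y]
    {μ : Measure Y} [IsFiniteMeasureOnCompacts μ] {s : Set Y} (hT : IsCompact T) (hsT : s ⊆ T)
    (hK : ContinuousOn (fun p : X × Y × ℝ => K p.1 p.2.1 p.2.2) (S ×ˢ T ×ˢ univ))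
    {L : ℝ} (hL : 0 ≤ L) (hKL : ∀ t ∈ S, ∀ σ ∈ T, ∀ u v : ℝ, |K t σ u - K t σ v| ≤ L * |u - v|)
    {x y : Y → ℝ} (hx : ContinuousOn x T) (hy : ContinuousOn y T)
    {M : ℝ} (hM : ∀ σ ∈ T, |x σ - y σ| ≤ M) (ht : t ∈ S) :
    |∫ σ in s, K t σ (x σ) ∂μ - ∫ σ in s, K t σ (y σ) ∂μ| ≤ L * M * μ.real s := by
  have hint : ∀ z : Y → ℝ, ContinuousOn z T → IntegrableOn (fun σ => K t σ (z σ)) s μ :=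
    fun z hz => ((hK.kernel_apply ht hz).integrableOn_compact hT).mono_set hsT
  refine abs_setIntegral_sub_le_of_abs_sub_le ((measure_mono hsT).trans_lt hT.measure_lt_top)
    (hint x hx) (hint y hy) fun σ hσ => ?_
  calc |K t σ (x σ) - K t σ (y σ)| ≤ L * |x σ - y σ| := hKL t ht σ (hsT hσ) _ _
    _ ≤ L * M := mul_le_mul_of_nonneg_left (hM σ (hsT hσ)) hL

end Kernel

theorem stmt_12_general {m : ℕ} (g h j : Fin m → ℝ)
    (hj : j ∈ Set.Icc g h)
    (K H : (Fin m → ℝ) → (Fin m → ℝ) → ℝ → ℝ)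
    (F : (Fin m → ℝ) → ℝ → ℝ → ℝ → ℝ)
    (hKcont : ContinuousOn (fun p : (Fin m → ℝ) × (Fin m → ℝ) × ℝ => K p.1 p.2.1 p.2.2)
      (Set.Icc g h ×ˢ Set.Icc g h ×ˢ Set.univ))
    (hHcont : ContinuousOn (fun p : (Fin m → ℝ) × (Fin m → ℝ) × ℝ => H p.1 p.2.1 p.2.2)
      (Set.Icc g h ×ˢ Set.Icc g h ×ˢ Set.univ))
    (α β γ : ℝ) (hα : 0 ≤ α) (hβ : 0 ≤ β) (hγ : 0 ≤ γ)
    (hF : ∀ t ∈ Set.Icc g h, ∀ u₁ v₁ w₁ u₂ v₂ w₂ : ℝ,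
      |F t u₁ v₁ w₁ - F t u₂ v₂ w₂| ≤ α * |u₁ - u₂| + β * |v₁ - v₂| + γ * |w₁ - w₂|)
    (L_K L_H : ℝ) (hLK : 0 ≤ L_K) (hLH : 0 ≤ L_H)
    (hK : ∀ t ∈ Set.Icc g h, ∀ s ∈ Set.Icc g h, ∀ u v : ℝ,
      |K t s u - K t s v| ≤ L_K * |u - v|)
    (hH : ∀ t ∈ Set.Icc g h, ∀ s ∈ Set.Icc g h, ∀ u v : ℝ,
      |H t s u - H t s v| ≤ L_H * |u - v|)
    (A : ((Fin m → ℝ) → ℝ) → ((Fin m → ℝ) → ℝ))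
    (hA : ∀ (x : (Fin m → ℝ) → ℝ) (t : Fin m → ℝ),
      A x t = F t (x t) (∫ s in Set.Icc g j, K t s (x s)) (∫ s in Set.Icc g h, H t s (x s)))
    (x y : (Fin m → ℝ) → ℝ)
    (hx : ContinuousOn x (Set.Icc g h)) (hy : ContinuousOn y (Set.Icc g h)) :
    (⨆ t : (Set.Icc g h : Set (Fin m → ℝ)), |A x t - A y t|) ≤
      (α + (β * L_K + γ * L_H) * ∏ i, (h i - g i)) *
        ⨆ s : (Set.Icc g h : Set (Fin m → ℝ)), |x s - y s| := by
  set M := ⨆ s : (Icc g h : Set (Fin m → ℝ)), |x s - y s|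
  set P := ∏ i, (h i - g i)
  have hM : ∀ s ∈ Icc g h, |x s - y s| ≤ M := fun s hs =>
    ((hx.sub hy).abs).le_ciSup_of_isCompact isCompact_Icc hs
  have hM₀ : 0 ≤ M := (abs_nonneg _).trans (hM j hj)
  have hvol_h : volume.real (Icc g h) = P := Real.volume_Icc_pi_toReal (hj.1.trans hj.2)
  have hvol_j : volume.real (Icc g j) ≤ P :=
    hvol_h ▸ measureReal_mono (Icc_subset_Icc le_rfl hj.2) isCompact_Icc.measure_ne_top
  have : Nonempty (Icc g h) := ⟨⟨j, hj⟩⟩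
  refine ciSup_le fun ⟨t, ht⟩ => ?_
  have hKint := abs_setIntegral_kernel_sub_le (μ := volume) isCompact_Icc
    (Icc_subset_Icc le_rfl hj.2) hKcont hLK hK hx hy hM ht
  have hHint := abs_setIntegral_kernel_sub_le (μ := volume) isCompact_Icc
    subset_rfl hHcont hLH hH hx hy hM ht
  rw [hA, hA]
  calc _ ≤ α * |x t - y t| + β * (L_K * M * volume.real (Icc g j))
        + γ * (L_H * M * volume.real (Icc g h)) := by
        refine (hF t ht _ _ _ _ _ _).trans ?_
        gcongr
    _ ≤ α * M + β * (L_K * M * P) + γ * (L_H * M * P) := by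
        rw [hvol_h]
        gcongr
        exact hM t ht
    _ = (α + (β * L_K + γ * L_H) * P) * M := by ring

/-- the integral operator `A` of equation (5.2) is Lipschitz on `C(D)`
(with the supremum norm on the box `D = [g₁,h₁] × ⋯ × [gₘ,hₘ]`) with constant
`α + (β L_K + γ L_H) ∏ᵢ (hᵢ - gᵢ)`. -/
theorem stmt_12 {m : ℕ} (g h j : Fin m → ℝ)
    (hgh : ∀ i, g i < h i) (hj : j ∈ Set.Icc g h)
    (K H : (Fin m → ℝ) → (Fin m → ℝ) → ℝ → ℝ)
    (F : (Fin m → ℝ) → ℝ → ℝ → ℝ → ℝ)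
    (hKcont : ContinuousOn (fun p : (Fin m → ℝ) × (Fin m → ℝ) × ℝ => K p.1 p.2.1 p.2.2)
      (Set.Icc g h ×ˢ Set.Icc g h ×ˢ Set.univ))
    (hHcont : ContinuousOn (fun p : (Fin m → ℝ) × (Fin m → ℝ) × ℝ => H p.1 p.2.1 p.2.2)
      (Set.Icc g h ×ˢ Set.Icc g h ×ˢ Set.univ))
    (hFcont : ContinuousOn (fun p : (Fin m → ℝ) × ℝ × ℝ × ℝ => F p.1 p.2.1 p.2.2.1 p.2.2.2)
      (Set.Icc g h ×ˢ Set.univ))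
    (α β γ : ℝ) (hα : 0 ≤ α) (hβ : 0 ≤ β) (hγ : 0 ≤ γ)
    (hF : ∀ t ∈ Set.Icc g h, ∀ u₁ v₁ w₁ u₂ v₂ w₂ : ℝ,
      |F t u₁ v₁ w₁ - F t u₂ v₂ w₂| ≤ α * |u₁ - u₂| + β * |v₁ - v₂| + γ * |w₁ - w₂|)
    (L_K L_H : ℝ) (hLK : 0 ≤ L_K) (hLH : 0 ≤ L_H)
    (hK : ∀ t ∈ Set.Icc g h, ∀ s ∈ Set.Icc g h, ∀ u v : ℝ,
      |K t s u - K t s v| ≤ L_K * |u - v|)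
    (hH : ∀ t ∈ Set.Icc g h, ∀ s ∈ Set.Icc g h, ∀ u v : ℝ,
      |H t s u - H t s v| ≤ L_H * |u - v|)
    (A : ((Fin m → ℝ) → ℝ) → ((Fin m → ℝ) → ℝ))
    (hA : ∀ (x : (Fin m → ℝ) → ℝ) (t : Fin m → ℝ),
      A x t = F t (x t) (∫ s in Set.Icc g j, K t s (x s)) (∫ s in Set.Icc g h, H t s (x s)))
    (x y : (Fin m → ℝ) → ℝ)
    (hx : ContinuousOn x (Set.Icc g h)) (hy : ContinuousOn y (Set.Icc g h)) :
    (⨆ t : (Set.Icc g h : Set (Fin m → ℝ)), |A x t - A y t|) ≤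
      (α + (β * L_K + γ * L_H) * ∏ i, (h i - g i)) *
        ⨆ s : (Set.Icc g h : Set (Fin m → ℝ)), |x s - y s| :=
  stmt_12_general g h j hj K H F hKcont hHcont α β γ hα hβ hγ hF L_K L_H hLK hLH hK hH A hA x y hx
    hy
end

section
/- Let G be a Banach space, A : G → G a map, p ∈ G a fixed point of A, and suppose there is a constant L ∈ [0,1) such that ‖Ax − Ap‖ ≤ L‖x − p‖ for all x ∈ G. Let {δₙ} ⊂ [0,1] and let {cₙ} be generated from c₀ ∈ G by aₙ = A cₙ, bₙ = (1−δₙ)aₙ + δₙ A aₙ, c_{n+1} = A bₙ. Then for all n, ‖c_{n+1} − p‖ ≤ ‖c₀ − p‖ · ∏_{k=0}^{n} (1 − δₖ(1 − L)). -/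
/-! Each step contracts the distance to `p` by `L` (from `aₙ = A cₙ`), by `1 - δₙ(1 - L)`
(from the convex combination `bₙ`) and by `L` again (from `cₙ₊₁ = A bₙ`); since `L² ≤ 1`,
`‖cₙ₊₁ - p‖ ≤ (1 - δₙ(1 - L)) ‖cₙ - p‖`, and the estimate follows by telescoping. -/

open Finset

theorem le_mul_prod_range_of_succ_le_mul {u r : ℕ → ℝ} (hr : ∀ n, 0 ≤ r n)
    (h : ∀ n, u (n + 1) ≤ r n * u n) (n : ℕ) : u n ≤ u 0 * ∏ k ∈ range n, r k := by
  induction n with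
  | zero => simp
  | succ n ih =>
    calc u (n + 1) ≤ r n * u n := h n
      _ ≤ r n * (u 0 * ∏ k ∈ range n, r k) := mul_le_mul_of_nonneg_left ih (hr n)
      _ = u 0 * ∏ k ∈ range (n + 1), r k := by rw [prod_range_succ]; ring

theorem one_sub_mul_one_sub_nonneg {t L : ℝ} (ht : t ∈ Set.Icc (0 : ℝ) 1)
    (hL : L ∈ Set.Icc (0 : ℝ) 1) : 0 ≤ 1 - t * (1 - L) :=
  sub_nonneg.2 (mul_le_one₀ ht.2 (sub_nonneg.2 hL.2) (by linarith [hL.1]))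

section

variable {G : Type*} [NormedAddCommGroup G] [NormedSpace ℝ G]

theorem norm_convexComb_sub_le {x y p : G} {t L : ℝ} (ht : t ∈ Set.Icc (0 : ℝ) 1)
    (hy : ‖y - p‖ ≤ L * ‖x - p‖) :
    ‖(1 - t) • x + t • y - p‖ ≤ (1 - t * (1 - L)) * ‖x - p‖ := by
  obtain ⟨ht0, ht1⟩ := ht
  calc ‖(1 - t) • x + t • y - p‖ = ‖(1 - t) • (x - p) + t • (y - p)‖ := by congr 1; module
    _ ≤ (1 - t) * ‖x - p‖ + t * ‖y - p‖ := by
      refine (norm_add_le _ _).trans_eq ?_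
      rw [norm_smul_of_nonneg (sub_nonneg.2 ht1), norm_smul_of_nonneg ht0]
    _ ≤ (1 - t) * ‖x - p‖ + t * (L * ‖x - p‖) := by gcongr
    _ = (1 - t * (1 - L)) * ‖x - p‖ := by ring

theorem iteration_step_norm_sub_le {A : G → G} {p : G} {L t : ℝ} (hL : L ∈ Set.Icc (0 : ℝ) 1)
    (hA : ∀ x, ‖A x - p‖ ≤ L * ‖x - p‖) (ht : t ∈ Set.Icc (0 : ℝ) 1) (x : G) :
    ‖A ((1 - t) • A x + t • A (A x)) - p‖ ≤ (1 - t * (1 - L)) * ‖x - p‖ := by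
  have hr : 0 ≤ 1 - t * (1 - L) := one_sub_mul_one_sub_nonneg ht hL
  calc ‖A ((1 - t) • A x + t • A (A x)) - p‖
      ≤ L * ‖(1 - t) • A x + t • A (A x) - p‖ := hA _
    _ ≤ L * ((1 - t * (1 - L)) * ‖A x - p‖) :=
      mul_le_mul_of_nonneg_left (norm_convexComb_sub_le ht (hA _)) hL.1
    _ ≤ L * ((1 - t * (1 - L)) * (L * ‖x - p‖)) :=
      mul_le_mul_of_nonneg_left (mul_le_mul_of_nonneg_left (hA x) hr) hL.1
    _ = (L * L) * ((1 - t * (1 - L)) * ‖x - p‖) := by ring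
    _ ≤ 1 * ((1 - t * (1 - L)) * ‖x - p‖) :=
      mul_le_mul_of_nonneg_right (mul_le_one₀ hL.2 hL.1 hL.2) (mul_nonneg hr (norm_nonneg _))
    _ = (1 - t * (1 - L)) * ‖x - p‖ := one_mul _

end

theorem stmt_13_general {G : Type*} [NormedAddCommGroup G] [NormedSpace ℝ G]
    (A : G → G) (p : G) (hp : A p = p)
    (L : ℝ) (hL : L ∈ Set.Ico (0 : ℝ) 1)
    (hA : ∀ x : G, ‖A x - A p‖ ≤ L * ‖x - p‖)
    (δ : ℕ → ℝ) (hδ : ∀ n, δ n ∈ Set.Icc (0 : ℝ) 1)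
    (a b c : ℕ → G)
    (ha : ∀ n, a n = A (c n))
    (hb : ∀ n, b n = (1 - δ n) • a n + δ n • A (a n))
    (hc : ∀ n, c (n + 1) = A (b n)) :
    ∀ n, ‖c (n + 1) - p‖ ≤ ‖c 0 - p‖ * ∏ k ∈ Finset.range (n + 1), (1 - δ k * (1 - L)) := by
  rw [hp] at hA
  have hL' : L ∈ Set.Icc (0 : ℝ) 1 := Set.Ico_subset_Icc_self hL
  have step : ∀ n, ‖c (n + 1) - p‖ ≤ (1 - δ n * (1 - L)) * ‖c n - p‖ := fun n => by
    rw [hc, hb, ha]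
    exact iteration_step_norm_sub_le hL' hA (hδ n) (c n)
  exact fun n => le_mul_prod_range_of_succ_le_mul (u := fun n => ‖c n - p‖)
    (fun n => one_sub_mul_one_sub_nonneg (hδ n) hL') step (n + 1)

/-- product estimate along the iteration (1.2) for a quasi-contraction. -/
theorem stmt_13 {G : Type*} [NormedAddCommGroup G] [NormedSpace ℝ G] [CompleteSpace G]
    (A : G → G) (p : G) (hp : A p = p)
    (L : ℝ) (hL : L ∈ Set.Ico (0 : ℝ) 1)
    (hA : ∀ x : G, ‖A x - A p‖ ≤ L * ‖x - p‖)
    (δ : ℕ → ℝ) (hδ : ∀ n, δ n ∈ Set.Icc (0 : ℝ) 1)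
    (a b c : ℕ → G)
    (ha : ∀ n, a n = A (c n))
    (hb : ∀ n, b n = (1 - δ n) • a n + δ n • A (a n))
    (hc : ∀ n, c (n + 1) = A (b n)) :
    ∀ n, ‖c (n + 1) - p‖ ≤ ‖c 0 - p‖ * ∏ k ∈ Finset.range (n + 1), (1 - δ k * (1 - L)) :=
  stmt_13_general A p hp L hL hA δ hδ a b c ha hb hc
end

section
/- Let D = [g₁,h₁] × ⋯ × [gₘ,hₘ] ⊂ ℝᵐ with gᵢ < hᵢ, let j ∈ D, and let K, H : D × D × ℝ → ℝ and F : D × ℝ³ → ℝ be continuous functions satisfying: |F(t,u₁,v₁,w₁) − F(t,u₂,v₂,w₂)| ≤ α|u₁−u₂| + β|v₁−v₂| + γ|w₁−w₂| for nonnegative constants α, β, γ; |K(t,s,u) − K(t,s,v)| ≤ L_K|u−v| and |H(t,s,u) − H(t,s,v)| ≤ L_H|u−v| for nonnegative constants L_K, L_H; and α + (β L_K + γ L_H)∏ᵢ(hᵢ−gᵢ) < 1. Let {δₙ} ⊂ [0,1] satisfy ∑_{n} δₙ = ∞, define A on C(D) by (Ax)(t) = F(t, x(t), ∫_{[g,j]}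 K(t,s,x(s)) ds, ∫_{[g,h]} H(t,s,x(s)) ds), and let {cₙ} be generated from c₀ ∈ C(D) by aₙ = A cₙ, bₙ = (1−δₙ)aₙ + δₙ A aₙ, c_{n+1} = A bₙ. Then the integral equation x(t) = F(t, x(t), ∫_{[g,j]} K(t,s,x(s)) ds, ∫_{[g,h]} H(t,s,x(s)) ds) has a unique solution p ∈ C(D) and ‖cₙ − p‖ → 0 in the supremum norm as n → ∞. -/
/-!
With `q = α + (β L_K + γ L_H) ∏ᵢ (hᵢ - gᵢ) < 1`, the operator `A` induces a
`q`-contraction of `C(D, ℝ)`: the two integrals move by at most `L · ‖x - y‖ · vol D`.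
Banach's theorem gives the unique continuous solution `p`. For the iteration, a contraction
fixing `p` maps each closed ball around `p` into itself, and closed balls are convex; so one
step `c ↦ A ((1-δ) A c + δ A (A c))` shrinks the distance to `p` by the factor `q`, and
`cₙ → p` geometrically for any `δₙ ∈ [0, 1]`.
-/

open MeasureTheory Filter Set Topology Function

section Ishikawa

variable {E : Type*} [NormedAddCommGroup E] [NormedSpace ℝ E]

def ishikawaStep (T : E → E) (δ : ℝ) (x : E) : E :=
  T ((1 - δ) • T x + δ • T (T x))

def ishikawaSeq (T : E → E) (δ : ℕ → ℝ) (x₀ : E) : ℕ → E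
  | 0 => x₀
  | n + 1 => ishikawaStep T (δ n) (ishikawaSeq T δ x₀ n)

variable {T : E → E} {K : NNReal} {p : E}

theorem ContractingWith.dist_ishikawaStep_le (hT : ContractingWith K T) (hp : IsFixedPt T p)
    {δ : ℝ} (hδ : δ ∈ Icc (0 : ℝ) 1) (x : E) :
    dist (ishikawaStep T δ x) p ≤ K * dist x p := by
  have hTp : ∀ y, dist (T y) p ≤ K * dist y p := fun y => by
    simpa only [hp.eq] using hT.2.dist_le_mul y p
  have hT_ball : ∀ y r, dist y p ≤ r → dist (T y) p ≤ r := fun y r hy =>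
    (hTp y).trans <| (mul_le_of_le_one_left dist_nonneg hT.1.le).trans hy
  have hTTx := hT_ball _ _ (hTp x)
  have hmid : (1 - δ) • T x + δ • T (T x) ∈ Metric.closedBall p (K * dist x p) :=
    convex_closedBall p _ (Metric.mem_closedBall.2 (hTp x)) (Metric.mem_closedBall.2 hTTx)
      (sub_nonneg.2 hδ.2) hδ.1 (sub_add_cancel 1 δ)
  exact hT_ball _ _ hmid

theorem ContractingWith.tendsto_ishikawaSeq (hT : ContractingWith K T) (hp : IsFixedPt T p)
    {δ : ℕ → ℝ} (hδ : ∀ n, δ n ∈ Icc (0 : ℝ) 1) (x₀ : E) :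
    Tendsto (ishikawaSeq T δ x₀) atTop (𝓝 p) := by
  have hle : ∀ n, dist (ishikawaSeq T δ x₀ n) p ≤ K ^ n * dist x₀ p := by
    intro n
    induction n with
    | zero => simp [ishikawaSeq]
    | succ n ih =>
      calc dist (ishikawaSeq T δ x₀ (n + 1)) p ≤ K * dist (ishikawaSeq T δ x₀ n) p :=
            hT.dist_ishikawaStep_le hp (hδ n) _
        _ ≤ K * (K ^ n * dist x₀ p) := by gcongr
        _ = K ^ (n + 1) * dist x₀ p := by ring
  have hK : Tendsto (fun n => (K : ℝ) ^ n * dist x₀ p) atTop (𝓝 0) := by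
    simpa using (tendsto_pow_atTop_nhds_zero_of_lt_one K.2 hT.1).mul_const (dist x₀ p)
  exact tendsto_iff_dist_tendsto_zero.2 (squeeze_zero (fun _ => dist_nonneg) hle hK)

end Ishikawa

theorem abs_setIntegral_sub_setIntegral_le {Y : Type*} [MeasurableSpace Y] {μ : Measure Y}
    {f₁ f₂ : Y → ℝ} {S : Set Y} {C : ℝ} (hS : μ S < ⊤) (hf₁ : IntegrableOn f₁ S μ)
    (hf₂ : IntegrableOn f₂ S μ) (hC : ∀ y ∈ S, |f₁ y - f₂ y| ≤ C) :
    |∫ y in S, f₁ y ∂μ - ∫ y in S, f₂ y ∂μ| ≤ C * μ.real S := by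
  rw [← integral_sub hf₁ hf₂]
  exact norm_setIntegral_le_of_norm_le_const hS fun y hy =>
    (Real.norm_eq_abs _).trans_le (hC y hy)

section ParametricIntegral

variable {X Y : Type*} [TopologicalSpace X] [FirstCountableTopology X] [TopologicalSpace Y]
  [MeasurableSpace Y] [OpensMeasurableSpace Y] {μ : Measure Y} [IsFiniteMeasureOnCompacts μ]

theorem continuousOn_setIntegral_of_continuousOn_prod {f : X → Y → ℝ} {U : Set X} {S : Set Y}
    (hU : IsCompact U) (hS : IsCompact S) (hSm : MeasurableSet S)
    (hf : ContinuousOn (Function.uncurry f) (U ×ˢ S)) :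
    ContinuousOn (fun x => ∫ y in S, f x y ∂μ) U := by
  obtain ⟨C, hC⟩ := (hU.prod hS).exists_bound_of_continuousOn hf
  refine continuousOn_of_dominated (bound := fun _ => C) (fun x hx => ?_) (fun x hx => ?_)
    (integrableOn_const hS.measure_lt_top.ne) ?_
  · exact (hf.comp (continuousOn_const.prodMk continuousOn_id) fun y hy => ⟨hx, hy⟩)
      |>.aestronglyMeasurable hSm
  · filter_upwards [ae_restrict_mem hSm] with y hy using hC (x, y) ⟨hx, hy⟩
  · filter_upwards [ae_restrict_mem hSm] with y hy
    exact hf.comp (continuousOn_id.prodMk continuousOn_const) fun x hx => ⟨hx, hy⟩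

end ParametricIntegral

section Kernel

variable {X : Type*} [TopologicalSpace X] {k : X → X → ℝ → ℝ} {D : Set X} {y z : X → ℝ}

theorem continuousOn_kernel_comp
    (hk : ContinuousOn (fun p : X × X × ℝ => k p.1 p.2.1 p.2.2) (D ×ˢ D ×ˢ univ))
    (hy : ContinuousOn y D) : ContinuousOn (fun p : X × X => k p.1 p.2 (y p.2)) (D ×ˢ D) :=
  hk.comp (continuousOn_fst.prodMk (continuousOn_snd.prodMk
    (hy.comp continuousOn_snd fun _ hp => hp.2))) fun _ hp => ⟨hp.1, hp.2, trivial⟩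

variable [MeasurableSpace X] [OpensMeasurableSpace X] [T2Space X] {μ : Measure X}
  [IsFiniteMeasureOnCompacts μ] {t : X} {S : Set X}

theorem integrableOn_kernel_comp
    (hk : ContinuousOn (fun p : X × X × ℝ => k p.1 p.2.1 p.2.2) (D ×ˢ D ×ˢ univ))
    (hy : ContinuousOn y D) (ht : t ∈ D) (hS : IsCompact S) (hSD : S ⊆ D) :
    IntegrableOn (fun s => k t s (y s)) S μ :=
  ((continuousOn_kernel_comp hk hy).comp (continuousOn_const.prodMk continuousOn_id)
    fun _ hs => ⟨ht, hSD hs⟩).integrableOn_compact hS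

theorem abs_setIntegral_kernel_comp_sub_le {L d : ℝ}
    (hk : ContinuousOn (fun p : X × X × ℝ => k p.1 p.2.1 p.2.2) (D ×ˢ D ×ˢ univ))
    (hkL : ∀ t ∈ D, ∀ s ∈ D, ∀ u v : ℝ, |k t s u - k t s v| ≤ L * |u - v|) (hL : 0 ≤ L)
    (hy : ContinuousOn y D) (hz : ContinuousOn z D) (hyz : ∀ s ∈ D, |y s - z s| ≤ d)
    (ht : t ∈ D) (hS : IsCompact S) (hSD : S ⊆ D) :
    |∫ s in S, k t s (y s) ∂μ - ∫ s in S, k t s (z s) ∂μ| ≤ L * d * μ.real S :=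
  abs_setIntegral_sub_setIntegral_le hS.measure_lt_top (integrableOn_kernel_comp hk hy ht hS hSD)
    (integrableOn_kernel_comp hk hz ht hS hSD) fun s hs =>
      (hkL t ht s (hSD hs) _ _).trans (mul_le_mul_of_nonneg_left (hyz s (hSD hs)) hL)

end Kernel

theorem extend_val_of_mem {α β : Type*} {s : Set α} (x : s → β) (e : α → β) {a : α}
    (ha : a ∈ s) : Function.extend Subtype.val x e a = x ⟨a, ha⟩ :=
  Subtype.val_injective.extend_apply x e ⟨a, ha⟩

theorem domRestrict_extend_val {α β : Type*} {s : Set α} (x : s → β) (e : α → β) :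
    s.domRestrict (Function.extend Subtype.val x e) = x :=
  funext fun t => extend_val_of_mem x e t.2

theorem continuousOn_extend_val {α β : Type*} [TopologicalSpace α] [TopologicalSpace β]
    {s : Set α} (x : C(s, β)) (e : α → β) : ContinuousOn (Function.extend Subtype.val x e) s :=
  continuousOn_iff_continuous_domRestrict.2 <| by rw [domRestrict_extend_val]; exact x.continuous

section IntegralOperator

variable {ι : Type*} [Fintype ι]

noncomputable def integralOperator (F : (ι → ℝ) → ℝ → ℝ → ℝ → ℝ)
    (K H : (ι → ℝ) → (ι → ℝ) → ℝ → ℝ) (g j h : ι → ℝ) (y : (ι → ℝ) → ℝ) (t : ι → ℝ) : ℝ :=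
  F t (y t) (∫ s in Icc g j, K t s (y s)) (∫ s in Icc g h, H t s (y s))

variable {F : (ι → ℝ) → ℝ → ℝ → ℝ → ℝ} {K H : (ι → ℝ) → (ι → ℝ) → ℝ → ℝ} {g j h : ι → ℝ}
  {y z : (ι → ℝ) → ℝ}

theorem integralOperator_eqOn (hj : j ∈ Icc g h) (hyz : EqOn y z (Icc g h)) :
    EqOn (integralOperator F K H g j h y) (integralOperator F K H g j h z) (Icc g h) := by
  intro t ht
  have hKyz : ∫ s in Icc g j, K t s (y s) = ∫ s in Icc g j, K t s (z s) :=
    setIntegral_congr_fun measurableSet_Icc fun s hs => by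
      rw [hyz (Icc_subset_Icc_right hj.2 hs)]
  have hHyz : ∫ s in Icc g h, H t s (y s) = ∫ s in Icc g h, H t s (z s) :=
    setIntegral_congr_fun measurableSet_Icc fun s hs => by rw [hyz hs]
  simp only [integralOperator, hyz ht, hKyz, hHyz]

theorem continuousOn_integralOperator (hj : j ∈ Icc g h)
    (hKc : ContinuousOn (fun p : (ι → ℝ) × (ι → ℝ) × ℝ => K p.1 p.2.1 p.2.2)
      (Icc g h ×ˢ Icc g h ×ˢ univ))
    (hHc : ContinuousOn (fun p : (ι → ℝ) × (ι → ℝ) × ℝ => H p.1 p.2.1 p.2.2)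
      (Icc g h ×ˢ Icc g h ×ˢ univ))
    (hFc : ContinuousOn (fun p : (ι → ℝ) × ℝ × ℝ × ℝ => F p.1 p.2.1 p.2.2.1 p.2.2.2)
      (Icc g h ×ˢ univ))
    (hy : ContinuousOn y (Icc g h)) :
    ContinuousOn (integralOperator F K H g j h y) (Icc g h) := by
  have hKint : ContinuousOn (fun t => ∫ s in Icc g j, K t s (y s)) (Icc g h) :=
    continuousOn_setIntegral_of_continuousOn_prod isCompact_Icc isCompact_Icc measurableSet_Icc
      ((continuousOn_kernel_comp hKc hy).mono (prod_mono subset_rfl (Icc_subset_Icc_right hj.2)))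
  have hHint : ContinuousOn (fun t => ∫ s in Icc g h, H t s (y s)) (Icc g h) :=
    continuousOn_setIntegral_of_continuousOn_prod isCompact_Icc isCompact_Icc measurableSet_Icc
      (continuousOn_kernel_comp hHc hy)
  exact hFc.comp (continuousOn_id.prodMk (hy.prodMk (hKint.prodMk hHint)))
    fun t ht => ⟨ht, trivial⟩

theorem abs_integralOperator_sub_le {α β γ L_K L_H d : ℝ} {t : ι → ℝ} (hj : j ∈ Icc g h)
    (hKc : ContinuousOn (fun p : (ι → ℝ) × (ι → ℝ) × ℝ => K p.1 p.2.1 p.2.2)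
      (Icc g h ×ˢ Icc g h ×ˢ univ))
    (hHc : ContinuousOn (fun p : (ι → ℝ) × (ι → ℝ) × ℝ => H p.1 p.2.1 p.2.2)
      (Icc g h ×ˢ Icc g h ×ˢ univ))
    (hα : 0 ≤ α) (hβ : 0 ≤ β) (hγ : 0 ≤ γ)
    (hF : ∀ t ∈ Icc g h, ∀ u₁ v₁ w₁ u₂ v₂ w₂ : ℝ,
      |F t u₁ v₁ w₁ - F t u₂ v₂ w₂| ≤ α * |u₁ - u₂| + β * |v₁ - v₂| + γ * |w₁ - w₂|)
    (hLK : 0 ≤ L_K) (hLH : 0 ≤ L_H)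
    (hK : ∀ t ∈ Icc g h, ∀ s ∈ Icc g h, ∀ u v : ℝ, |K t s u - K t s v| ≤ L_K * |u - v|)
    (hH : ∀ t ∈ Icc g h, ∀ s ∈ Icc g h, ∀ u v : ℝ, |H t s u - H t s v| ≤ L_H * |u - v|)
    (hy : ContinuousOn y (Icc g h)) (hz : ContinuousOn z (Icc g h))
    (hyz : ∀ s ∈ Icc g h, |y s - z s| ≤ d) (ht : t ∈ Icc g h) :
    |integralOperator F K H g j h y t - integralOperator F K H g j h z t| ≤
      (α + (β * L_K + γ * L_H) * ∏ i, (h i - g i)) * d := by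
  have hd : 0 ≤ d := (abs_nonneg _).trans (hyz t ht)
  have hvol : volume.real (Icc g h) = ∏ i, (h i - g i) :=
    Real.volume_Icc_pi_toReal (hj.1.trans hj.2)
  have hKyz := abs_setIntegral_kernel_comp_sub_le (μ := volume) hKc hK hLK hy hz hyz ht
    isCompact_Icc (Icc_subset_Icc_right hj.2)
  have hHyz := abs_setIntegral_kernel_comp_sub_le (μ := volume) hHc hH hLH hy hz hyz ht
    isCompact_Icc subset_rfl
  rw [hvol] at hHyz
  have hvolj : volume.real (Icc g j) ≤ ∏ i, (h i - g i) :=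
    hvol ▸ measureReal_mono (Icc_subset_Icc_right hj.2) isCompact_Icc.measure_lt_top.ne
  calc _ ≤ α * |y t - z t| + β * |(∫ s in Icc g j, K t s (y s)) - ∫ s in Icc g j, K t s (z s)|
        + γ * |(∫ s in Icc g h, H t s (y s)) - ∫ s in Icc g h, H t s (z s)| :=
          hF t ht _ _ _ _ _ _
    _ ≤ α * d + β * (L_K * d * ∏ i, (h i - g i)) + γ * (L_H * d * ∏ i, (h i - g i)) := by
        gcongr
        · exact hyz t ht
        · exact hKyz.trans (by gcongr)
    _ = (α + (β * L_K + γ * L_H) * ∏ i, (h i - g i)) * d := by ring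

end IntegralOperator

section BoxOperator

variable {ι : Type*} [Fintype ι] {F : (ι → ℝ) → ℝ → ℝ → ℝ → ℝ}
  {K H : (ι → ℝ) → (ι → ℝ) → ℝ → ℝ} {g j h : ι → ℝ} {y : (ι → ℝ) → ℝ}
  (hj : j ∈ Icc g h)
  (hKc : ContinuousOn (fun p : (ι → ℝ) × (ι → ℝ) × ℝ => K p.1 p.2.1 p.2.2)
    (Icc g h ×ˢ Icc g h ×ˢ univ))
  (hHc : ContinuousOn (fun p : (ι → ℝ) × (ι → ℝ) × ℝ => H p.1 p.2.1 p.2.2)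
    (Icc g h ×ˢ Icc g h ×ˢ univ))
  (hFc : ContinuousOn (fun p : (ι → ℝ) × ℝ × ℝ × ℝ => F p.1 p.2.1 p.2.2.1 p.2.2.2)
    (Icc g h ×ˢ univ))

-- `integralOperator` only reads its argument on the box, so extending `x` by `0` is harmless.
noncomputable def boxIntegralOperator (x : C(Icc g h, ℝ)) : C(Icc g h, ℝ) :=
  ⟨(Icc g h).domRestrict (integralOperator F K H g j h (Function.extend Subtype.val x 0)),
    (continuousOn_integralOperator hj hKc hHc hFc (continuousOn_extend_val x 0)).domRestrict⟩

theorem domRestrict_integralOperator {x : C(Icc g h, ℝ)} (hy : (Icc g h).domRestrict y = x) :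
    (Icc g h).domRestrict (integralOperator F K H g j h y) =
      boxIntegralOperator hj hKc hHc hFc x :=
  domRestrict_eq_domRestrict_iff.2 <| integralOperator_eqOn hj <|
    domRestrict_eq_domRestrict_iff.1 <| by rw [hy, domRestrict_extend_val]

theorem eqOn_integralOperator_iff_isFixedPt (hy : ContinuousOn y (Icc g h)) :
    EqOn y (integralOperator F K H g j h y) (Icc g h) ↔
      IsFixedPt (boxIntegralOperator hj hKc hHc hFc)
        ⟨(Icc g h).domRestrict y, hy.domRestrict⟩ := by
  rw [IsFixedPt, ← DFunLike.coe_fn_eq,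
    ← domRestrict_integralOperator hj hKc hHc hFc (x := ⟨_, hy.domRestrict⟩) rfl,
    ContinuousMap.coe_mk, domRestrict_eq_domRestrict_iff, eqOn_comm]

theorem contractingWith_boxIntegralOperator {α β γ L_K L_H : ℝ}
    (hα : 0 ≤ α) (hβ : 0 ≤ β) (hγ : 0 ≤ γ)
    (hF : ∀ t ∈ Icc g h, ∀ u₁ v₁ w₁ u₂ v₂ w₂ : ℝ,
      |F t u₁ v₁ w₁ - F t u₂ v₂ w₂| ≤ α * |u₁ - u₂| + β * |v₁ - v₂| + γ * |w₁ - w₂|)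
    (hLK : 0 ≤ L_K) (hLH : 0 ≤ L_H)
    (hK : ∀ t ∈ Icc g h, ∀ s ∈ Icc g h, ∀ u v : ℝ, |K t s u - K t s v| ≤ L_K * |u - v|)
    (hH : ∀ t ∈ Icc g h, ∀ s ∈ Icc g h, ∀ u v : ℝ, |H t s u - H t s v| ≤ L_H * |u - v|)
    (hcontr : α + (β * L_K + γ * L_H) * ∏ i, (h i - g i) < 1) :
    ContractingWith (α + (β * L_K + γ * L_H) * ∏ i, (h i - g i)).toNNReal
      (boxIntegralOperator hj hKc hHc hFc) := by
  have hq : 0 ≤ α + (β * L_K + γ * L_H) * ∏ i, (h i - g i) := by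
    have : 0 ≤ ∏ i, (h i - g i) :=
      Finset.prod_nonneg fun i _ => sub_nonneg.2 (hj.1.trans hj.2 i)
    positivity
  refine ⟨Real.toNNReal_lt_one.2 hcontr, LipschitzWith.of_dist_le_mul fun x z => ?_⟩
  rw [Real.coe_toNNReal _ hq, ContinuousMap.dist_le (mul_nonneg hq dist_nonneg)]
  intro t
  have hxz : ∀ s ∈ Icc g h,
      |Function.extend Subtype.val x 0 s - Function.extend Subtype.val z 0 s| ≤ dist x z :=
    fun s hs => by
      rw [extend_val_of_mem x 0 hs, extend_val_of_mem z 0 hs, ← Real.dist_eq]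
      exact ContinuousMap.dist_apply_le_dist _
  exact abs_integralOperator_sub_le hj hKc hHc hα hβ hγ hF hLK hLH hK hH
    (continuousOn_extend_val x 0) (continuousOn_extend_val z 0) hxz t.2

theorem domRestrict_eq_ishikawaSeq {δ : ℕ → ℝ} {a b c : ℕ → (ι → ℝ) → ℝ}
    (hc0 : ContinuousOn (c 0) (Icc g h)) (ha : ∀ n, a n = integralOperator F K H g j h (c n))
    (hb : ∀ n, b n = fun t => (1 - δ n) * a n t + δ n * integralOperator F K H g j h (a n) t)
    (hc : ∀ n, c (n + 1) = integralOperator F K H g j h (b n)) (n : ℕ) :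
    (Icc g h).domRestrict (c n) =
      ishikawaSeq (boxIntegralOperator hj hKc hHc hFc) δ ⟨_, hc0.domRestrict⟩ n := by
  induction n with
  | zero => rfl
  | succ n ih =>
    set T := boxIntegralOperator hj hKc hHc hFc
    set x := ishikawaSeq T δ ⟨_, hc0.domRestrict⟩ n
    have hax : (Icc g h).domRestrict (a n) = T x := by
      rw [ha n]; exact domRestrict_integralOperator hj hKc hHc hFc ih
    have hTax : (Icc g h).domRestrict (integralOperator F K H g j h (a n)) = T (T x) :=
      domRestrict_integralOperator hj hKc hHc hFc hax
    have hbx : (Icc g h).domRestrict (b n) = ⇑((1 - δ n) • T x + δ n • T (T x)) := by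
      funext t
      simp only [domRestrict_apply, hb n, ContinuousMap.add_apply, ContinuousMap.smul_apply,
        smul_eq_mul, ← congrFun hax t, ← congrFun hTax t]
    rw [hc n]
    exact domRestrict_integralOperator hj hKc hHc hFc hbx

end BoxOperator

theorem stmt_15_general {m : ℕ} (g h j : Fin m → ℝ)
    (hj : j ∈ Set.Icc g h)
    (K H : (Fin m → ℝ) → (Fin m → ℝ) → ℝ → ℝ)
    (F : (Fin m → ℝ) → ℝ → ℝ → ℝ → ℝ)
    (hKcont : ContinuousOn (fun p : (Fin m → ℝ) × (Fin m → ℝ) × ℝ => K p.1 p.2.1 p.2.2)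
      (Set.Icc g h ×ˢ Set.Icc g h ×ˢ Set.univ))
    (hHcont : ContinuousOn (fun p : (Fin m → ℝ) × (Fin m → ℝ) × ℝ => H p.1 p.2.1 p.2.2)
      (Set.Icc g h ×ˢ Set.Icc g h ×ˢ Set.univ))
    (hFcont : ContinuousOn (fun p : (Fin m → ℝ) × ℝ × ℝ × ℝ => F p.1 p.2.1 p.2.2.1 p.2.2.2)
      (Set.Icc g h ×ˢ Set.univ))
    (α β γ : ℝ) (hα : 0 ≤ α) (hβ : 0 ≤ β) (hγ : 0 ≤ γ)
    (hF : ∀ t ∈ Set.Icc g h, ∀ u₁ v₁ w₁ u₂ v₂ w₂ : ℝ,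
      |F t u₁ v₁ w₁ - F t u₂ v₂ w₂| ≤ α * |u₁ - u₂| + β * |v₁ - v₂| + γ * |w₁ - w₂|)
    (L_K L_H : ℝ) (hLK : 0 ≤ L_K) (hLH : 0 ≤ L_H)
    (hK : ∀ t ∈ Set.Icc g h, ∀ s ∈ Set.Icc g h, ∀ u v : ℝ,
      |K t s u - K t s v| ≤ L_K * |u - v|)
    (hH : ∀ t ∈ Set.Icc g h, ∀ s ∈ Set.Icc g h, ∀ u v : ℝ,
      |H t s u - H t s v| ≤ L_H * |u - v|)
    (hcontr : α + (β * L_K + γ * L_H) * ∏ i, (h i - g i) < 1)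
    (δ : ℕ → ℝ) (hδ : ∀ n, δ n ∈ Set.Icc (0 : ℝ) 1)
    (A : ((Fin m → ℝ) → ℝ) → ((Fin m → ℝ) → ℝ))
    (hA : ∀ (x : (Fin m → ℝ) → ℝ) (t : Fin m → ℝ),
      A x t = F t (x t) (∫ s in Set.Icc g j, K t s (x s)) (∫ s in Set.Icc g h, H t s (x s)))
    (a b c : ℕ → ((Fin m → ℝ) → ℝ)) (hc0 : ContinuousOn (c 0) (Set.Icc g h))
    (ha : ∀ n, a n = A (c n))
    (hb : ∀ n, b n = fun t => (1 - δ n) * a n t + δ n * A (a n) t)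
    (hc : ∀ n, c (n + 1) = A (b n)) :
    ∃ p : (Fin m → ℝ) → ℝ, ContinuousOn p (Set.Icc g h) ∧
      (∀ t ∈ Set.Icc g h,
        p t = F t (p t) (∫ s in Set.Icc g j, K t s (p s)) (∫ s in Set.Icc g h, H t s (p s))) ∧
      (∀ x : (Fin m → ℝ) → ℝ, ContinuousOn x (Set.Icc g h) →
        (∀ t ∈ Set.Icc g h,
          x t = F t (x t) (∫ s in Set.Icc g j, K t s (x s)) (∫ s in Set.Icc g h, H t s (x s))) →
        Set.EqOn x p (Set.Icc g h)) ∧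
      Tendsto (fun n => ⨆ t : (Set.Icc g h : Set (Fin m → ℝ)), |c n t - p t|) atTop
        (nhds 0) := by
  obtain rfl : A = integralOperator F K H g j h := funext fun x => funext (hA x)
  have hT := contractingWith_boxIntegralOperator hj hKcont hHcont hFcont hα hβ hγ hF
    hLK hLH hK hH hcontr
  set T := boxIntegralOperator hj hKcont hHcont hFcont
  obtain ⟨u, hu, hu_unique⟩ : ∃ u, IsFixedPt T u ∧ ∀ v, IsFixedPt T v → v = u :=
    ⟨_, hT.fixedPoint_isFixedPt, fun _ => hT.fixedPoint_unique⟩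
  set p := Function.extend Subtype.val u 0
  have hp : ContinuousOn p (Set.Icc g h) := continuousOn_extend_val _ 0
  have hpT : (⟨_, hp.domRestrict⟩ : C(Set.Icc g h, ℝ)) = u :=
    DFunLike.coe_injective (domRestrict_extend_val _ 0)
  refine ⟨p, hp, ?_, fun x hx hxA => ?_, ?_⟩
  · exact (eqOn_integralOperator_iff_isFixedPt hj hKcont hHcont hFcont hp).2 (hpT ▸ hu)
  · have hxT :=
      hu_unique _ ((eqOn_integralOperator_iff_isFixedPt hj hKcont hHcont hFcont hx).1 hxA)
    rw [← hpT] at hxT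
    exact domRestrict_eq_domRestrict_iff.1 (congrArg DFunLike.coe hxT)
  · refine (tendsto_iff_dist_tendsto_zero.1
      (hT.tendsto_ishikawaSeq hu hδ ⟨_, hc0.domRestrict⟩)).congr fun n => ?_
    rw [ContinuousMap.dist_eq_iSup]
    refine iSup_congr fun t => ?_
    rw [← domRestrict_eq_ishikawaSeq hj hKcont hHcont hFcont hc0 ha hb hc, ← hpT, Real.dist_eq]
    rfl

/-- the integral equation (5.1) has a unique continuous solution `p` on the
box `D = [g₁,h₁] × ⋯ × [gₘ,hₘ]`, and the iteration (1.2) applied to the operator `A` of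
(5.2) converges to `p` in the supremum norm, provided `∑ δₙ = ∞`. -/
theorem stmt_15 {m : ℕ} (g h j : Fin m → ℝ)
    (hgh : ∀ i, g i < h i) (hj : j ∈ Set.Icc g h)
    (K H : (Fin m → ℝ) → (Fin m → ℝ) → ℝ → ℝ)
    (F : (Fin m → ℝ) → ℝ → ℝ → ℝ → ℝ)
    (hKcont : ContinuousOn (fun p : (Fin m → ℝ) × (Fin m → ℝ) × ℝ => K p.1 p.2.1 p.2.2)
      (Set.Icc g h ×ˢ Set.Icc g h ×ˢ Set.univ))
    (hHcont : ContinuousOn (fun p : (Fin m → ℝ) × (Fin m → ℝ) × ℝ => H p.1 p.2.1 p.2.2)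
      (Set.Icc g h ×ˢ Set.Icc g h ×ˢ Set.univ))
    (hFcont : ContinuousOn (fun p : (Fin m → ℝ) × ℝ × ℝ × ℝ => F p.1 p.2.1 p.2.2.1 p.2.2.2)
      (Set.Icc g h ×ˢ Set.univ))
    (α β γ : ℝ) (hα : 0 ≤ α) (hβ : 0 ≤ β) (hγ : 0 ≤ γ)
    (hF : ∀ t ∈ Set.Icc g h, ∀ u₁ v₁ w₁ u₂ v₂ w₂ : ℝ,
      |F t u₁ v₁ w₁ - F t u₂ v₂ w₂| ≤ α * |u₁ - u₂| + β * |v₁ - v₂| + γ * |w₁ - w₂|)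
    (L_K L_H : ℝ) (hLK : 0 ≤ L_K) (hLH : 0 ≤ L_H)
    (hK : ∀ t ∈ Set.Icc g h, ∀ s ∈ Set.Icc g h, ∀ u v : ℝ,
      |K t s u - K t s v| ≤ L_K * |u - v|)
    (hH : ∀ t ∈ Set.Icc g h, ∀ s ∈ Set.Icc g h, ∀ u v : ℝ,
      |H t s u - H t s v| ≤ L_H * |u - v|)
    (hcontr : α + (β * L_K + γ * L_H) * ∏ i, (h i - g i) < 1)
    (δ : ℕ → ℝ) (hδ : ∀ n, δ n ∈ Set.Icc (0 : ℝ) 1)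
    (hsum : Tendsto (fun n : ℕ => ∑ k ∈ Finset.range (n + 1), δ k) atTop atTop)
    (A : ((Fin m → ℝ) → ℝ) → ((Fin m → ℝ) → ℝ))
    (hA : ∀ (x : (Fin m → ℝ) → ℝ) (t : Fin m → ℝ),
      A x t = F t (x t) (∫ s in Set.Icc g j, K t s (x s)) (∫ s in Set.Icc g h, H t s (x s)))
    (a b c : ℕ → ((Fin m → ℝ) → ℝ)) (hc0 : ContinuousOn (c 0) (Set.Icc g h))
    (ha : ∀ n, a n = A (c n))
    (hb : ∀ n, b n = fun t => (1 - δ n) * a n t + δ n * A (a n) t)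
    (hc : ∀ n, c (n + 1) = A (b n)) :
    ∃ p : (Fin m → ℝ) → ℝ, ContinuousOn p (Set.Icc g h) ∧
      (∀ t ∈ Set.Icc g h,
        p t = F t (p t) (∫ s in Set.Icc g j, K t s (p s)) (∫ s in Set.Icc g h, H t s (p s))) ∧
      (∀ x : (Fin m → ℝ) → ℝ, ContinuousOn x (Set.Icc g h) →
        (∀ t ∈ Set.Icc g h,
          x t = F t (x t) (∫ s in Set.Icc g j, K t s (x s)) (∫ s in Set.Icc g h, H t s (x s))) →
        Set.EqOn x p (Set.Icc g h)) ∧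
      Tendsto (fun n => ⨆ t : (Set.Icc g h : Set (Fin m → ℝ)), |c n t - p t|) atTop
        (nhds 0) :=
  stmt_15_general g h j hj K H F hKcont hHcont hFcont α β γ hα hβ hγ hF L_K L_H hLK hLH hK hH hcontr
    δ hδ A hA a b c hc0 ha hb hc
end
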